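/- arXiv:1607.01324 — 2 statements merged into one kernel-verified Lean document; each statement's English description precedes it below -/
import Mathlib

section
/- Let (Λ, ξ) be a decorated D-lattice of dimension N. Then Õ⁺(Λ) ⊆ Γ_ξ ⊆ O⁺(Λ) with [Γ_ξ : Õ⁺(Λ)] = 2, and Γ_ξ = O⁺(Λ) unless N ≡ 6 (mod 8), in which case [O⁺(Λ) : Γ_ξ] = 3. Moreover -id_Λ ∈ Γ_ξ always, while -id_Λ ∈ Õ(Λ) if and only if N is even. -/
noncomputable section

open scoped BigOperators

/-- `x` has integer entries. -/
def IntVec {n : ℕ} (x : Fin n → ℚ) : Prop := ∀ i, ∃ a : ℤ, x i = (a : ℚ)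

/-- The lattice `D_n = {x ∈ ℤⁿ : Σ xᵢ ≡ 0 mod 2}` (viewed inside `ℚⁿ`),
equipped with the negative of the Euclidean form `negE`. -/
def DSet (n : ℕ) : Set (Fin n → ℚ) :=
  {x | IntVec x ∧ ∃ a : ℤ, (∑ i, x i) = 2 * (a : ℚ)}

/-- The negative of the standard Euclidean bilinear form. -/
def negE {n : ℕ} (x y : Fin n → ℚ) : ℚ := - ∑ i, x i * y i

/-- The vector `(1/2, …, 1/2)`. -/
def halfVec (n : ℕ) : Fin n → ℚ := fun _ => 1/2

/-- The lattice `Λ_N = U² ⊕ D_{N-2}` realized inside `ℚ^{N+2}`: integral vectors whose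
coordinates of index `≥ 4` have even sum.  The first four coordinates carry the two
hyperbolic planes. -/
def LamSet (N : ℕ) : Set (Fin (N + 2) → ℚ) :=
  {x | IntVec x ∧ ∃ a : ℤ, (∑ i : Fin (N + 2), if 4 ≤ (i : ℕ) then x i else 0) = 2 * (a : ℚ)}

/-- The bilinear form of `Λ_N = U² ⊕ D_{N-2}`. -/
def LamForm (N : ℕ) (x y : Fin (N + 2) → ℚ) : ℚ :=
  x 0 * y 1 + x 1 * y 0 + x 2 * y 3 + x 3 * y 2
    - ∑ i : Fin (N + 2), (if 4 ≤ (i : ℕ) then x i * y i else 0)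

/-- The (negative definite) `E₈` lattice inside `ℚ⁸`: vectors that are integral or
half-integral, with even coordinate sum; the form is `negE`. -/
def E8Set : Set (Fin 8 → ℚ) :=
  {x | (IntVec x ∨ IntVec (x - halfVec 8)) ∧ ∃ a : ℤ, (∑ i, x i) = 2 * (a : ℚ)}

/-- Ambient space for the even unimodular lattice `II_{2,2+8k} = U² ⊕ E₈^k`. -/
abbrev IIAmb (k : ℕ) := (Fin 4 → ℚ) × (Fin k → Fin 8 → ℚ)

/-- The form of `U²` on `ℚ⁴`. -/
def UForm (x y : Fin 4 → ℚ) : ℚ := x 0 * y 1 + x 1 * y 0 + x 2 * y 3 + x 3 * y 2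

/-- The bilinear form of `II_{2,2+8k} = U² ⊕ E₈^k`. -/
def IIForm (k : ℕ) (x y : IIAmb k) : ℚ := UForm x.1 y.1 + ∑ j, negE (x.2 j) (y.2 j)

/-- The even unimodular lattice `II_{2,2+8k} = U² ⊕ E₈^k` inside its ambient space. -/
def IISet (k : ℕ) : Set (IIAmb k) := {p | IntVec p.1 ∧ ∀ j, p.2 j ∈ E8Set}

/-- `v` has divisibility `d` in `Λ_N`: all pairings with lattice vectors are divisible
by `d`, and `d` is attained. -/
def HasDiv (N : ℕ) (v : Fin (N + 2) → ℚ) (d : ℤ) : Prop :=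
  (∀ x ∈ LamSet N, ∃ a : ℤ, LamForm N v x = (d : ℚ) * a) ∧
  ∃ x ∈ LamSet N, LamForm N v x = (d : ℚ)

/-- `ξ` represents a decoration of `Λ_N`: an element of the dual lattice whose class in
the discriminant group has square `1` modulo `2ℤ`. -/
def IsDeco (N : ℕ) (ξ : Fin (N + 2) → ℚ) : Prop :=
  (∀ y ∈ LamSet N, ∃ a : ℤ, LamForm N ξ y = (a : ℚ)) ∧
  ∃ a : ℤ, LamForm N ξ ξ = 1 + 2 * (a : ℚ)

/-- The determinant of the projection of `g` on the positive definite plane spanned by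
the orthogonal positive vectors `p, q`; its positivity characterizes `O⁺`. -/
def posdet {V : Type*} (B : V → V → ℚ) (p q : V) (g : V → V) : ℚ :=
  B (g p) p * B (g q) q - B (g p) q * B (g q) p

/-- A positive norm vector of `Λ_N` supported on the first hyperbolic plane. -/
def pPos (N : ℕ) : Fin (N + 2) → ℚ := fun i => if (i : ℕ) = 0 ∨ (i : ℕ) = 1 then 1 else 0

/-- A positive norm vector of `Λ_N` supported on the second hyperbolic plane. -/
def qPos (N : ℕ) : Fin (N + 2) → ℚ := fun i => if (i : ℕ) = 2 ∨ (i : ℕ) = 3 then 1 else 0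

/-- `g ∈ O⁺(Λ_N)`. -/
def InOp (N : ℕ) (g : (Fin (N + 2) → ℚ) ≃ₗ[ℚ] (Fin (N + 2) → ℚ)) : Prop :=
  (∀ x y, LamForm N (g x) (g y) = LamForm N x y) ∧
  (∀ x, x ∈ LamSet N ↔ g x ∈ LamSet N) ∧
  0 < posdet (LamForm N) (pPos N) (qPos N) ⇑g

/-- `g ∈ Õ⁺(Λ_N)`: additionally `g` acts trivially on the discriminant group. -/
def InTil (N : ℕ) (g : (Fin (N + 2) → ℚ) ≃ₗ[ℚ] (Fin (N + 2) → ℚ)) : Prop :=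
  InOp N g ∧ ∀ x, (∀ y ∈ LamSet N, ∃ a : ℤ, LamForm N x y = (a : ℚ)) →
    g x - x ∈ LamSet N

/-- `g ∈ Γ_ξ`: additionally `g` fixes the decoration `ξ`. -/
def InGam (N : ℕ) (ξv : Fin (N + 2) → ℚ)
    (g : (Fin (N + 2) → ℚ) ≃ₗ[ℚ] (Fin (N + 2) → ℚ)) : Prop :=
  InOp N g ∧ g ξv - ξv ∈ LamSet N

namespace S14
open Finset

set_option maxHeartbeats 1000000

variable {N : ℕ}

def ZI (r : ℚ) : Prop := ∃ a : ℤ, r = (a : ℚ)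

lemma ZI.add {r s : ℚ} (h : ZI r) (h' : ZI s) : ZI (r + s) := by
  obtain ⟨a, rfl⟩ := h; obtain ⟨b, rfl⟩ := h'; exact ⟨a + b, by push_cast; ring⟩

lemma ZI.neg' {r : ℚ} (h : ZI r) : ZI (-r) := by
  obtain ⟨a, rfl⟩ := h; exact ⟨-a, by push_cast; ring⟩

lemma ZI.sub {r s : ℚ} (h : ZI r) (h' : ZI s) : ZI (r - s) := by
  obtain ⟨a, rfl⟩ := h; obtain ⟨b, rfl⟩ := h'; exact ⟨a - b, by push_cast; ring⟩

lemma ZI.mul {r s : ℚ} (h : ZI r) (h' : ZI s) : ZI (r * s) := by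
  obtain ⟨a, rfl⟩ := h; obtain ⟨b, rfl⟩ := h'; exact ⟨a * b, by push_cast; ring⟩

lemma ZI.zero : ZI 0 := ⟨0, by norm_num⟩
lemma ZI.one : ZI 1 := ⟨1, by norm_num⟩
lemma ZI.intCast (a : ℤ) : ZI (a : ℚ) := ⟨a, rfl⟩

lemma ZI.sum {ι : Type*} (s : Finset ι) (f : ι → ℚ) (h : ∀ i ∈ s, ZI (f i)) :
    ZI (∑ i ∈ s, f i) := by
  classical
  induction s using Finset.induction_on with
  | empty => simpa using ZI.zero
  | @insert a s ha ih =>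
    rw [Finset.sum_insert ha]
    exact (h a (by simp)).add (ih fun i hi => h i (by simp [hi]))

lemma not_ZI_half : ¬ ZI (1/2 : ℚ) := by
  rintro ⟨a, ha⟩
  have h2 : (1:ℚ) = 2 * a := by rw [← ha]; norm_num
  have : (1:ℤ) = 2 * a := by exact_mod_cast h2
  omega

def SD (N : ℕ) (x : Fin (N+2) → ℚ) : ℚ := ∑ i : Fin (N+2), if 4 ≤ (i : ℕ) then x i else 0

lemma SD_add (x y : Fin (N+2) → ℚ) : SD N (x + y) = SD N x + SD N y := by
  unfold SD
  rw [← Finset.sum_add_distrib]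
  refine Finset.sum_congr rfl fun i _ => ?_
  by_cases hi : 4 ≤ (i:ℕ) <;> simp [hi]

lemma SD_smul (c : ℚ) (x : Fin (N+2) → ℚ) : SD N (c • x) = c * SD N x := by
  unfold SD
  rw [Finset.mul_sum]
  refine Finset.sum_congr rfl fun i _ => ?_
  by_cases hi : 4 ≤ (i:ℕ) <;> simp [hi]

lemma SD_neg (x : Fin (N+2) → ℚ) : SD N (-x) = - SD N x := by
  have h := SD_smul (-1) x
  simpa using h

lemma SD_sub (x y : Fin (N+2) → ℚ) : SD N (x - y) = SD N x - SD N y := by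
  have h := SD_add (x - y) y
  simp at h
  linarith

lemma mem_lam {x : Fin (N+2) → ℚ} :
    x ∈ LamSet N ↔ (∀ i, ZI (x i)) ∧ ∃ a : ℤ, SD N x = 2 * (a:ℚ) := Iff.rfl

lemma lam_add {x y : Fin (N+2) → ℚ} (hx : x ∈ LamSet N) (hy : y ∈ LamSet N) :
    x + y ∈ LamSet N := by
  rw [mem_lam] at hx hy ⊢
  obtain ⟨hx1, a, ha⟩ := hx; obtain ⟨hy1, b, hb⟩ := hy
  refine ⟨fun i => by simpa using (hx1 i).add (hy1 i), ⟨a + b, ?_⟩⟩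
  rw [SD_add, ha, hb]; push_cast; ring

lemma lam_smul_int (k : ℤ) {x : Fin (N+2) → ℚ} (hx : x ∈ LamSet N) :
    (k:ℚ) • x ∈ LamSet N := by
  rw [mem_lam] at hx ⊢
  obtain ⟨h1, a, ha⟩ := hx
  refine ⟨fun i => by simpa using (ZI.intCast k).mul (h1 i), ⟨k * a, ?_⟩⟩
  rw [SD_smul, ha]; push_cast; ring

lemma lam_neg {x : Fin (N+2) → ℚ} (hx : x ∈ LamSet N) : -x ∈ LamSet N := by
  have h := lam_smul_int (-1) hx
  simpa using h

lemma lam_sub {x y : Fin (N+2) → ℚ} (hx : x ∈ LamSet N) (hy : y ∈ LamSet N) :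
    x - y ∈ LamSet N := by
  have := lam_add hx (lam_neg hy)
  simpa [sub_eq_add_neg] using this

lemma lam_zero : (0 : Fin (N+2) → ℚ) ∈ LamSet N := by
  rw [mem_lam]
  exact ⟨fun i => ZI.zero, ⟨0, by simp [SD]⟩⟩

/-! form bilinearity -/

lemma form_add_right (x y z : Fin (N+2) → ℚ) :
    LamForm N x (y + z) = LamForm N x y + LamForm N x z := by
  unfold LamForm
  have h : (∑ i : Fin (N+2), if 4 ≤ (i:ℕ) then x i * (y + z) i else 0)
      = (∑ i : Fin (N+2), if 4 ≤ (i:ℕ) then x i * y i else 0)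
        + (∑ i : Fin (N+2), if 4 ≤ (i:ℕ) then x i * z i else 0) := by
    rw [← Finset.sum_add_distrib]
    refine Finset.sum_congr rfl fun i _ => ?_
    by_cases hi : 4 ≤ (i:ℕ)
    · simp only [hi, if_true, Pi.add_apply]; ring
    · simp [hi]
  rw [h]
  simp only [Pi.add_apply]; ring

lemma form_smul_right (c : ℚ) (x y : Fin (N+2) → ℚ) :
    LamForm N x (c • y) = c * LamForm N x y := by
  unfold LamForm
  have h : (∑ i : Fin (N+2), if 4 ≤ (i:ℕ) then x i * (c • y) i else 0)
      = c * (∑ i : Fin (N+2), if 4 ≤ (i:ℕ) then x i * y i else 0) := by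
    rw [Finset.mul_sum]
    refine Finset.sum_congr rfl fun i _ => ?_
    by_cases hi : 4 ≤ (i:ℕ)
    · simp only [hi, if_true, Pi.smul_apply, smul_eq_mul]; ring
    · simp [hi]
  rw [h]
  simp only [Pi.smul_apply, smul_eq_mul]; ring

lemma form_comm (x y : Fin (N+2) → ℚ) : LamForm N x y = LamForm N y x := by
  unfold LamForm
  have h : (∑ i : Fin (N+2), if 4 ≤ (i:ℕ) then x i * y i else 0)
      = (∑ i : Fin (N+2), if 4 ≤ (i:ℕ) then y i * x i else 0) :=
    Finset.sum_congr rfl fun i _ => by split <;> ring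
  rw [h]; ring

lemma form_add_left (x y z : Fin (N+2) → ℚ) :
    LamForm N (x + y) z = LamForm N x z + LamForm N y z := by
  rw [form_comm, form_add_right, form_comm z x, form_comm z y]

lemma form_smul_left (c : ℚ) (x y : Fin (N+2) → ℚ) :
    LamForm N (c • x) y = c * LamForm N x y := by
  rw [form_comm, form_smul_right, form_comm y x]

lemma form_neg_right (x y : Fin (N+2) → ℚ) : LamForm N x (-y) = - LamForm N x y := by
  have h := form_smul_right (-1) x y
  simpa using h

lemma form_neg_left (x y : Fin (N+2) → ℚ) : LamForm N (-x) y = - LamForm N x y := by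
  rw [form_comm, form_neg_right, form_comm y x]

lemma form_sub_right (x y z : Fin (N+2) → ℚ) :
    LamForm N x (y - z) = LamForm N x y - LamForm N x z := by
  have h := form_add_right x y (-z)
  simpa [sub_eq_add_neg, form_neg_right] using h

lemma form_sub_left (x y z : Fin (N+2) → ℚ) :
    LamForm N (x - y) z = LamForm N x z - LamForm N y z := by
  rw [form_comm, form_sub_right, form_comm z x, form_comm z y]


variable {N : ℕ}

lemma val0 : ((0 : Fin (N+2)) : ℕ) = 0 := by simp
lemma val1 : ((1 : Fin (N+2)) : ℕ) = 1 := by simp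
lemma val2 (hN : 3 ≤ N) : ((2 : Fin (N+2)) : ℕ) = 2 := by
  show 2 % (N+2) = 2; exact Nat.mod_eq_of_lt (by omega)
lemma val3 (hN : 3 ≤ N) : ((3 : Fin (N+2)) : ℕ) = 3 := by
  show 3 % (N+2) = 3; exact Nat.mod_eq_of_lt (by omega)
lemma val2m (hN : 3 ≤ N) : 2 % (N+2) = 2 := Nat.mod_eq_of_lt (by omega)
lemma val3m (hN : 3 ≤ N) : 3 % (N+2) = 3 := Nat.mod_eq_of_lt (by omega)

def ev (N k : ℕ) : Fin (N+2) → ℚ := fun i => if (i:ℕ) = k then 1 else 0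
def hv (N : ℕ) : Fin (N+2) → ℚ := fun i => if 4 ≤ (i:ℕ) then 1/2 else 0

lemma ev_int (k : ℕ) : ∀ i, ZI (ev N k i) := fun i => by
  unfold ev; split; exacts [ZI.one, ZI.zero]

lemma SD_ev_small {k : ℕ} (hk : k < 4) : SD N (ev N k) = 0 :=
  Finset.sum_eq_zero fun i _ => by
    by_cases h4 : 4 ≤ (i:ℕ)
    · have h : (i:ℕ) ≠ k := by omega
      simp [ev, h4, h]
    · simp [h4]

lemma SD_ev_big {k : ℕ} (h4 : 4 ≤ k) (hk : k < N+2) : SD N (ev N k) = 1 := by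
  rw [SD, Finset.sum_eq_single (⟨k, hk⟩ : Fin (N+2))]
  · simp [ev, h4]
  · intro i _ hne
    by_cases hi : 4 ≤ (i:ℕ)
    · have h : (i:ℕ) ≠ k := fun h => hne (Fin.ext h)
      simp [ev, hi, h]
    · simp [hi]
  · simp

lemma ev_mem_small {k : ℕ} (hk : k < 4) : ev N k ∈ LamSet N :=
  mem_lam.2 ⟨ev_int k, ⟨0, by rw [SD_ev_small hk]; norm_num⟩⟩

lemma form_e0 (hN : 3 ≤ N) (x : Fin (N+2) → ℚ) : LamForm N (ev N 0) x = x 1 := by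
  have hs : (∑ i : Fin (N+2), if 4 ≤ (i:ℕ) then ev N 0 i * x i else 0) = 0 :=
    Finset.sum_eq_zero fun i _ => by
      by_cases hi : 4 ≤ (i:ℕ)
      · have h0 : (i:ℕ) ≠ 0 := by omega
        simp [ev, hi, h0]
      · simp [hi]
  unfold LamForm; rw [hs]
  simp [ev, val0, val1, val2 hN, val2m hN, val3 hN, val3m hN]

lemma form_e1 (hN : 3 ≤ N) (x : Fin (N+2) → ℚ) : LamForm N (ev N 1) x = x 0 := by
  have hs : (∑ i : Fin (N+2), if 4 ≤ (i:ℕ) then ev N 1 i * x i else 0) = 0 :=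
    Finset.sum_eq_zero fun i _ => by
      by_cases hi : 4 ≤ (i:ℕ)
      · have h0 : (i:ℕ) ≠ 1 := by omega
        simp [ev, hi, h0]
      · simp [hi]
  unfold LamForm; rw [hs]
  simp [ev, val0, val1, val2 hN, val2m hN, val3 hN, val3m hN]

lemma form_e2 (hN : 3 ≤ N) (x : Fin (N+2) → ℚ) : LamForm N (ev N 2) x = x 3 := by
  have hs : (∑ i : Fin (N+2), if 4 ≤ (i:ℕ) then ev N 2 i * x i else 0) = 0 :=
    Finset.sum_eq_zero fun i _ => by
      by_cases hi : 4 ≤ (i:ℕ)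
      · have h0 : (i:ℕ) ≠ 2 := by omega
        simp [ev, hi, h0]
      · simp [hi]
  unfold LamForm; rw [hs]
  simp [ev, val0, val1, val2 hN, val2m hN, val3 hN, val3m hN]

lemma form_e3 (hN : 3 ≤ N) (x : Fin (N+2) → ℚ) : LamForm N (ev N 3) x = x 2 := by
  have hs : (∑ i : Fin (N+2), if 4 ≤ (i:ℕ) then ev N 3 i * x i else 0) = 0 :=
    Finset.sum_eq_zero fun i _ => by
      by_cases hi : 4 ≤ (i:ℕ)
      · have h0 : (i:ℕ) ≠ 3 := by omega
        simp [ev, hi, h0]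
      · simp [hi]
  unfold LamForm; rw [hs]
  simp [ev, val0, val1, val2 hN, val2m hN, val3 hN, val3m hN]

lemma form_eD (hN : 3 ≤ N) {k : ℕ} (h4 : 4 ≤ k) (hk : k < N+2) (x : Fin (N+2) → ℚ) :
    LamForm N (ev N k) x = - x ⟨k, hk⟩ := by
  have hs : (∑ i : Fin (N+2), if 4 ≤ (i:ℕ) then ev N k i * x i else 0) = x ⟨k, hk⟩ := by
    rw [Finset.sum_eq_single (⟨k, hk⟩ : Fin (N+2))]
    · simp [ev, h4]
    · intro i _ hne
      by_cases hi : 4 ≤ (i:ℕ)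
      · have h : (i:ℕ) ≠ k := fun h => hne (Fin.ext h)
        simp [ev, hi, h]
      · simp [hi]
    · simp
  unfold LamForm; rw [hs]
  have e0 : ev N k 0 = 0 := by
    have h : ¬ (0:ℕ) = k := by omega
    simp [ev, val0, h]
  have e1 : ev N k 1 = 0 := by
    have h : ¬ (1:ℕ) = k := by omega
    simp [ev, val1, h]
  have e2 : ev N k 2 = 0 := by
    have h : ¬ (2:ℕ) = k := by omega
    simp [ev, val2 hN, val2m hN, h]
  have e3 : ev N k 3 = 0 := by
    have h : ¬ (3:ℕ) = k := by omega
    simp [ev, val3 hN, val3m hN, h]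
  rw [e0, e1, e2, e3]; ring

lemma form_hv (hN : 3 ≤ N) (x : Fin (N+2) → ℚ) :
    LamForm N (hv N) x = -(1/2) * SD N x := by
  have hs : (∑ i : Fin (N+2), if 4 ≤ (i:ℕ) then hv N i * x i else 0) = (1/2) * SD N x := by
    rw [SD, Finset.mul_sum]
    refine Finset.sum_congr rfl fun i _ => ?_
    by_cases hi : 4 ≤ (i:ℕ) <;> simp [hv, hi]
  unfold LamForm; rw [hs]
  have e0 : hv N 0 = 0 := by simp [hv, val0]
  have e1 : hv N 1 = 0 := by simp [hv, val1]
  have e2 : hv N 2 = 0 := by simp [hv, val2 hN, val2m hN]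
  have e3 : hv N 3 = 0 := by simp [hv, val3 hN, val3m hN]
  rw [e0, e1, e2, e3]; ring

lemma form_p (hN : 3 ≤ N) (x : Fin (N+2) → ℚ) :
    LamForm N x (pPos N) = x 0 + x 1 := by
  have hs : (∑ i : Fin (N+2), if 4 ≤ (i:ℕ) then x i * pPos N i else 0) = 0 :=
    Finset.sum_eq_zero fun i _ => by
      by_cases hi : 4 ≤ (i:ℕ)
      · have h : ¬((i:ℕ) = 0 ∨ (i:ℕ) = 1) := by omega
        simp only [pPos, hi, h, ↓reduceIte, mul_zero]
      · simp [hi]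
  unfold LamForm; rw [hs]
  have e0 : pPos N 0 = 1 := by simp [pPos, val0]
  have e1 : pPos N 1 = 1 := by simp [pPos, val1]
  have e2 : pPos N 2 = 0 := by simp [pPos, val2 hN, val2m hN]
  have e3 : pPos N 3 = 0 := by simp [pPos, val3 hN, val3m hN]
  rw [e0, e1, e2, e3]; ring

lemma form_q (hN : 3 ≤ N) (x : Fin (N+2) → ℚ) :
    LamForm N x (qPos N) = x 2 + x 3 := by
  have hs : (∑ i : Fin (N+2), if 4 ≤ (i:ℕ) then x i * qPos N i else 0) = 0 :=
    Finset.sum_eq_zero fun i _ => by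
      by_cases hi : 4 ≤ (i:ℕ)
      · have h : ¬((i:ℕ) = 2 ∨ (i:ℕ) = 3) := by omega
        simp [qPos, hi, h]
      · simp [hi]
  unfold LamForm; rw [hs]
  have e0 : qPos N 0 = 0 := by simp [qPos, val0]
  have e1 : qPos N 1 = 0 := by simp [qPos, val1]
  have e2 : qPos N 2 = 1 := by simp [qPos, val2 hN, val2m hN]
  have e3 : qPos N 3 = 1 := by simp [qPos, val3 hN, val3m hN]
  rw [e0, e1, e2, e3]; ring

lemma form_pp (hN : 3 ≤ N) : LamForm N (pPos N) (pPos N) = 2 := by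
  rw [form_p hN]
  simp [pPos, val0, val1]; norm_num

lemma form_qq (hN : 3 ≤ N) : LamForm N (qPos N) (qPos N) = 2 := by
  rw [form_q hN]
  simp [qPos, val2 hN, val2m hN, val3 hN, val3m hN]; norm_num

lemma form_pq (hN : 3 ≤ N) : LamForm N (pPos N) (qPos N) = 0 := by
  rw [form_q hN]
  simp [pPos, val2 hN, val2m hN, val3 hN, val3m hN]

lemma form_qp (hN : 3 ≤ N) : LamForm N (qPos N) (pPos N) = 0 := by
  rw [form_p hN]
  simp [qPos, val0, val1]

lemma sum_const_ge4 (hN : 3 ≤ N) (c : ℚ) :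
    (∑ i : Fin (N+2), if 4 ≤ (i:ℕ) then c else 0) = ((N:ℚ) - 2) * c := by
  have h1 : (∑ i : Fin (N+2), if 4 ≤ (i:ℕ) then c else 0)
      = ∑ k ∈ Finset.range (N+2), if 4 ≤ k then c else 0 :=
    Fin.sum_univ_eq_sum_range (fun k => if 4 ≤ k then c else 0) (N+2)
  rw [h1, ← Finset.sum_filter]
  have h2 : (Finset.range (N+2)).filter (fun k => 4 ≤ k) = Finset.Ico 4 (N+2) := by
    ext k
    simp only [Finset.mem_filter, Finset.mem_range, Finset.mem_Ico]
    omega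
  rw [h2, Finset.sum_const, Nat.card_Ico]
  have h3 : ((N + 2 - 4 : ℕ) : ℚ) = (N:ℚ) - 2 := by
    have : N + 2 - 4 = N - 2 := by omega
    rw [this, Nat.cast_sub (by omega)]
    norm_num
  rw [nsmul_eq_mul, h3]

lemma SD_hv (hN : 3 ≤ N) : SD N (hv N) = ((N:ℚ) - 2) / 2 := by
  unfold SD
  have h : (∑ i : Fin (N+2), if 4 ≤ (i:ℕ) then hv N i else 0)
      = ∑ i : Fin (N+2), if 4 ≤ (i:ℕ) then (1/2 : ℚ) else 0 :=
    Finset.sum_congr rfl fun i _ => by by_cases hi : 4 ≤ (i:ℕ) <;> simp [hv, hi]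
  rw [h, sum_const_ge4 hN]
  ring


variable {N : ℕ}

def Dual (N : ℕ) (x : Fin (N+2) → ℚ) : Prop :=
  ∀ y ∈ LamSet N, ∃ a : ℤ, LamForm N x y = (a : ℚ)

def iL (N : ℕ) : Fin (N+2) := ⟨N+1, by omega⟩

lemma dual_add {x y : Fin (N+2) → ℚ} (hx : Dual N x) (hy : Dual N y) : Dual N (x + y) := by
  intro z hz
  obtain ⟨a, ha⟩ := hx z hz; obtain ⟨b, hb⟩ := hy z hz
  exact ⟨a + b, by rw [form_add_left, ha, hb]; push_cast; ring⟩

lemma dual_neg {x : Fin (N+2) → ℚ} (hx : Dual N x) : Dual N (-x) := by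
  intro z hz
  obtain ⟨a, ha⟩ := hx z hz
  exact ⟨-a, by rw [form_neg_left, ha]; push_cast; ring⟩

lemma dual_sub {x y : Fin (N+2) → ℚ} (hx : Dual N x) (hy : Dual N y) : Dual N (x - y) := by
  intro z hz
  obtain ⟨a, ha⟩ := hx z hz; obtain ⟨b, hb⟩ := hy z hz
  exact ⟨a - b, by rw [form_sub_left, ha, hb]; push_cast; ring⟩

lemma dual_smul_int (k : ℤ) {x : Fin (N+2) → ℚ} (hx : Dual N x) : Dual N ((k:ℚ) • x) := by
  intro z hz
  obtain ⟨a, ha⟩ := hx z hz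
  exact ⟨k * a, by rw [form_smul_left, ha]; push_cast; ring⟩

lemma lam_dual {x : Fin (N+2) → ℚ} (hx : x ∈ LamSet N) : Dual N x := by
  intro y hy
  rw [mem_lam] at hx hy
  obtain ⟨hx1, _⟩ := hx; obtain ⟨hy1, _⟩ := hy
  have h : ZI (LamForm N x y) := by
    unfold LamForm
    refine ZI.sub ?_ (ZI.sum _ _ fun i _ => ?_)
    · exact ((((hx1 0).mul (hy1 1)).add ((hx1 1).mul (hy1 0))).add
        ((hx1 2).mul (hy1 3))).add ((hx1 3).mul (hy1 2))
    · by_cases hi : 4 ≤ (i:ℕ)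
      · simpa [hi] using (hx1 i).mul (hy1 i)
      · simpa [hi] using ZI.zero
  exact h

lemma dual_intvec (hN : 3 ≤ N) {x : Fin (N+2) → ℚ} (h : ∀ i, ZI (x i)) : Dual N x := by
  intro y hy
  rw [mem_lam] at hy
  obtain ⟨hy1, a, ha⟩ := hy
  have hz : ZI (LamForm N x y) := by
    unfold LamForm
    refine ZI.sub ?_ (ZI.sum _ _ fun i _ => ?_)
    · exact ((((h 0).mul (hy1 1)).add ((h 1).mul (hy1 0))).add
        ((h 2).mul (hy1 3))).add ((h 3).mul (hy1 2))
    · by_cases hi : 4 ≤ (i:ℕ)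
      · simpa [hi] using (h i).mul (hy1 i)
      · simpa [hi] using ZI.zero
  exact hz

lemma dual_coords (hN : 3 ≤ N) {x : Fin (N+2) → ℚ} (hx : Dual N x) :
    (ZI (x 0) ∧ ZI (x 1) ∧ ZI (x 2) ∧ ZI (x 3)) ∧
    (∀ i : Fin (N+2), 4 ≤ (i:ℕ) → ZI (2 * x i)) ∧
    (∀ i j : Fin (N+2), 4 ≤ (i:ℕ) → 4 ≤ (j:ℕ) → ZI (x i - x j)) := by
  refine ⟨⟨?_, ?_, ?_, ?_⟩, ?_, ?_⟩
  · obtain ⟨a, ha⟩ := hx (ev N 1) (ev_mem_small (by norm_num))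
    rw [form_comm, form_e1 hN] at ha; exact ⟨a, ha⟩
  · obtain ⟨a, ha⟩ := hx (ev N 0) (ev_mem_small (by norm_num))
    rw [form_comm, form_e0 hN] at ha; exact ⟨a, ha⟩
  · obtain ⟨a, ha⟩ := hx (ev N 3) (ev_mem_small (by norm_num))
    rw [form_comm, form_e3 hN] at ha; exact ⟨a, ha⟩
  · obtain ⟨a, ha⟩ := hx (ev N 2) (ev_mem_small (by norm_num))
    rw [form_comm, form_e2 hN] at ha; exact ⟨a, ha⟩
  · intro i hi
    have hmem : (2:ℚ) • ev N (i:ℕ) ∈ LamSet N := by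
      rw [mem_lam]
      refine ⟨fun j => by simpa using (ZI.intCast 2).mul (ev_int _ j), ⟨1, ?_⟩⟩
      rw [SD_smul, SD_ev_big hi i.isLt]; norm_num
    obtain ⟨a, ha⟩ := hx _ hmem
    rw [form_smul_right, form_comm, form_eD hN hi i.isLt, Fin.eta] at ha
    exact ⟨-a, by push_cast; linarith⟩
  · intro i j hi hj
    by_cases hij : i = j
    · subst hij; simpa using ZI.zero
    · have hmem : ev N (i:ℕ) + ev N (j:ℕ) ∈ LamSet N := by
        rw [mem_lam]
        refine ⟨fun l => by simpa using (ev_int _ l).add (ev_int _ l), ⟨1, ?_⟩⟩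
        rw [SD_add, SD_ev_big hi i.isLt, SD_ev_big hj j.isLt]; norm_num
      obtain ⟨a, ha⟩ := hx _ hmem
      rw [form_add_right, form_comm x _, form_comm x _, form_eD hN hi i.isLt,
        form_eD hN hj j.isLt, Fin.eta, Fin.eta] at ha
      have hsum : ZI (x i + x j) := ⟨-a, by push_cast; linarith⟩
      have h2j : ZI (2 * x j) := by
        obtain ⟨b, hb⟩ := hx ((2:ℚ) • ev N (j:ℕ)) (by
          rw [mem_lam]
          refine ⟨fun l => by simpa using (ZI.intCast 2).mul (ev_int _ l), ⟨1, ?_⟩⟩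
          rw [SD_smul, SD_ev_big hj j.isLt]; norm_num)
        rw [form_smul_right, form_comm, form_eD hN hj j.isLt, Fin.eta] at hb
        exact ⟨-b, by push_cast; linarith⟩
      have := hsum.sub h2j
      exact ⟨Classical.choose this, by
        have h := Classical.choose_spec this
        rw [← h]; ring⟩

lemma dual_of (hN : 3 ≤ N) {x : Fin (N+2) → ℚ}
    (h03 : ZI (x 0) ∧ ZI (x 1) ∧ ZI (x 2) ∧ ZI (x 3))
    (i₄ : Fin (N+2)) (hi₄ : (i₄:ℕ) = 4)
    (h2 : ZI (2 * x i₄)) (hdiff : ∀ i : Fin (N+2), 4 ≤ (i:ℕ) → ZI (x i - x i₄)) :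
    Dual N x := by
  intro y hy
  rw [mem_lam] at hy
  obtain ⟨hy1, a, ha⟩ := hy
  have hsum : (∑ i : Fin (N+2), if 4 ≤ (i:ℕ) then x i * y i else 0)
      = (∑ i : Fin (N+2), if 4 ≤ (i:ℕ) then (x i - x i₄) * y i else 0) + x i₄ * SD N y := by
    rw [SD, Finset.mul_sum, ← Finset.sum_add_distrib]
    refine Finset.sum_congr rfl fun i _ => ?_
    by_cases hi : 4 ≤ (i:ℕ)
    · simp only [hi, if_true]; ring
    · simp [hi]
  have hterm : ZI (∑ i : Fin (N+2), if 4 ≤ (i:ℕ) then (x i - x i₄) * y i else 0) :=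
    ZI.sum _ _ fun i _ => by
      by_cases hi : 4 ≤ (i:ℕ)
      · simpa [hi] using (hdiff i hi).mul (hy1 i)
      · simpa [hi] using ZI.zero
  have hmid : ZI (x i₄ * SD N y) := by
    rw [ha, show x i₄ * (2 * (a:ℚ)) = (2 * x i₄) * a from by ring]
    exact h2.mul (ZI.intCast a)
  have h : ZI (LamForm N x y) := by
    unfold LamForm
    rw [hsum]
    exact ZI.sub ((((h03.1.mul (hy1 1)).add (h03.2.1.mul (hy1 0))).add
      (h03.2.2.1.mul (hy1 3))).add (h03.2.2.2.mul (hy1 2))) (hterm.add hmid)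
  exact h

def ITp (N : ℕ) (x : Fin (N+2) → ℚ) : Prop := ∀ i : Fin (N+2), 4 ≤ (i:ℕ) → ZI (x i)
def HTp (N : ℕ) (x : Fin (N+2) → ℚ) : Prop := ∀ i : Fin (N+2), 4 ≤ (i:ℕ) → ZI (x i - 1/2)

lemma dual_hv (hN : 3 ≤ N) : Dual N (hv N) := by
  refine dual_of hN ⟨?_, ?_, ?_, ?_⟩ ⟨4, by omega⟩ rfl ?_ ?_
  · simp [hv, val0]; exact ZI.zero
  · simp [hv, val1]; exact ZI.zero
  · simp [hv, val2 hN, val2m hN]; exact ZI.zero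
  · simp [hv, val3 hN, val3m hN]; exact ZI.zero
  · have : hv N ⟨4, by omega⟩ = 1/2 := by simp [hv]
    rw [this]; norm_num; exact ZI.one
  · intro i hi
    have h1 : hv N i = 1/2 := by simp [hv, hi]
    have h2 : hv N ⟨4, by omega⟩ = 1/2 := by simp [hv]
    rw [h1, h2]; simpa using ZI.zero

lemma dual_cases (hN : 3 ≤ N) {x : Fin (N+2) → ℚ} (hx : Dual N x) : ITp N x ∨ HTp N x := by
  have i₄ : Fin (N+2) := ⟨4, by omega⟩
  have h2 := (dual_coords hN hx).2.1 ⟨4, by omega⟩ (by norm_num)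
  have hdiff := (dual_coords hN hx).2.2
  obtain ⟨a, ha⟩ := h2
  rcases Int.even_or_odd a with ⟨b, hb⟩ | ⟨b, hb⟩
  · left; intro i hi
    obtain ⟨c, hc⟩ := hdiff i ⟨4, by omega⟩ hi (by norm_num)
    have hx4 : x ⟨4, by omega⟩ = (b:ℚ) := by
      have : 2 * x ⟨4, by omega⟩ = 2 * (b:ℚ) := by rw [ha, hb]; push_cast; ring
      linarith
    have : x i = (c:ℚ) + (b:ℚ) := by rw [← hx4]; linarith
    exact ⟨c + b, by rw [this]; push_cast; ring⟩
  · right; intro i hi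
    obtain ⟨c, hc⟩ := hdiff i ⟨4, by omega⟩ hi (by norm_num)
    have hx4 : x ⟨4, by omega⟩ = (b:ℚ) + 1/2 := by
      have : 2 * x ⟨4, by omega⟩ = 2 * ((b:ℚ) + 1/2) := by rw [ha, hb]; push_cast; ring
      linarith
    have : x i - 1/2 = (c:ℚ) + (b:ℚ) := by rw [← sub_eq_iff_eq_add'] at hx4; nlinarith [hc]
    exact ⟨c + b, by rw [this]; push_cast; ring⟩

lemma dual_int_all (hN : 3 ≤ N) {x : Fin (N+2) → ℚ} (hx : Dual N x) (hi : ITp N x) :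
    ∀ i, ZI (x i) := by
  intro i
  rcases lt_or_ge (i:ℕ) 4 with h | h
  · have h4 : (i:ℕ) = 0 ∨ (i:ℕ) = 1 ∨ (i:ℕ) = 2 ∨ (i:ℕ) = 3 := by omega
    have hc := (dual_coords hN hx).1
    rcases h4 with h0 | h1 | h2 | h3
    · have : i = 0 := Fin.ext (by rw [val0]; exact h0)
      rw [this]; exact hc.1
    · have : i = 1 := Fin.ext (by rw [val1]; exact h1)
      rw [this]; exact hc.2.1
    · have : i = 2 := Fin.ext (by rw [val2 hN]; exact h2)
      rw [this]; exact hc.2.2.1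
    · have : i = 3 := Fin.ext (by rw [val3 hN]; exact h3)
      rw [this]; exact hc.2.2.2
  · exact hi i h


variable {N : ℕ}

lemma q_int (hN : 3 ≤ N) {x : Fin (N+2) → ℚ} (hx : Dual N x) (hi : ITp N x) :
    ∃ a b : ℤ, SD N x = (a:ℚ) ∧ LamForm N x x = (b:ℚ) ∧ (a + b) % 2 = 0 := by
  choose c hc using dual_int_all hN hx hi
  refine ⟨∑ i : Fin (N+2), if 4 ≤ (i:ℕ) then c i else 0,
    c 0 * c 1 + c 1 * c 0 + c 2 * c 3 + c 3 * c 2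
      - ∑ i : Fin (N+2), if 4 ≤ (i:ℕ) then c i * c i else 0, ?_, ?_, ?_⟩
  · rw [SD, Int.cast_sum]
    refine Finset.sum_congr rfl fun i _ => ?_
    by_cases h4 : 4 ≤ (i:ℕ) <;> simp [h4, hc i]
  · have hs : (∑ i : Fin (N+2), if 4 ≤ (i:ℕ) then x i * x i else 0)
        = ((∑ i : Fin (N+2), if 4 ≤ (i:ℕ) then c i * c i else 0 : ℤ) : ℚ) := by
      rw [Int.cast_sum]
      refine Finset.sum_congr rfl fun i _ => ?_
      by_cases h4 : 4 ≤ (i:ℕ) <;> simp [h4, hc i]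
    unfold LamForm
    rw [hs, hc 0, hc 1, hc 2, hc 3]
    push_cast; ring
  · set A := ∑ i : Fin (N+2), if 4 ≤ (i:ℕ) then c i else 0 with hA
    set B := ∑ i : Fin (N+2), if 4 ≤ (i:ℕ) then c i * c i else 0 with hB
    have hdvd : (2:ℤ) ∣ (A - B) := by
      rw [hA, hB, ← Finset.sum_sub_distrib]
      refine Finset.dvd_sum fun i _ => ?_
      by_cases h4 : 4 ≤ (i:ℕ)
      · simp only [h4, if_true]
        have he : Even ((c i - 1) * c i) := by
          have := Int.even_mul_succ_self (c i - 1)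
          simpa using this
        have : c i - c i * c i = -((c i - 1) * c i) := by ring
        rw [this]
        obtain ⟨t, ht⟩ := he.neg
        exact ⟨t, by omega⟩
      · simp [h4]
    obtain ⟨t, ht⟩ := hdvd
    have heq : A + (c 0 * c 1 + c 1 * c 0 + c 2 * c 3 + c 3 * c 2 - B)
        = 2 * (t + (c 0 * c 1 + c 2 * c 3)) := by linarith
    rw [heq]
    exact Int.mul_emod_right 2 _
  
lemma q_half (hN : 3 ≤ N) {x : Fin (N+2) → ℚ} (hx : Dual N x) (hh : HTp N x) :
    ∃ a b : ℤ, SD N x = ((N:ℚ)-2)/2 + (a:ℚ) ∧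
      LamForm N x x = -(((N:ℚ)-2)/4) + 2*(b:ℚ) := by
  set y := x - hv N with hy
  have hyd : Dual N y := dual_sub hx (dual_hv hN)
  have hyi : ITp N y := fun i hi => by
    have h := hh i hi
    have hhv : hv N i = 1/2 := by simp [hv, hi]
    simpa [hy, Pi.sub_apply, hhv] using h
  obtain ⟨a, b, hsd, hq, hpar⟩ := q_int hN hyd hyi
  have hsdx : SD N x = ((N:ℚ)-2)/2 + (a:ℚ) := by
    have h1 : SD N y = SD N x - SD N (hv N) := SD_sub x (hv N)
    rw [SD_hv hN] at h1
    rw [hsd] at h1; linarith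
  have hx' : x = y + hv N := by funext i; simp [hy]
  have hby : LamForm N y (hv N) = -(1/2) * (a:ℚ) := by
    rw [form_comm, form_hv hN, hsd]
  have hqhv : LamForm N (hv N) (hv N) = -(((N:ℚ)-2)/4) := by
    rw [form_hv hN, SD_hv hN]; ring
  have hqx : LamForm N x x = (b:ℚ) - (a:ℚ) + -(((N:ℚ)-2)/4) := by
    rw [hx', form_add_left, form_add_right, form_add_right, hq, hqhv, hby,
      form_comm (hv N) y, hby]
    ring
  have hk : ∃ k : ℤ, b - a = 2 * k := ⟨(b - a)/2, by omega⟩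
  obtain ⟨k, hk⟩ := hk
  refine ⟨a, k, hsdx, ?_⟩
  rw [hqx]
  have : ((b:ℚ) - a) = 2 * (k:ℚ) := by exact_mod_cast congrArg (Int.cast : ℤ → ℚ) hk
  linarith

lemma half_mod8 (hN : 3 ≤ N) {x : Fin (N+2) → ℚ} (hx : Dual N x) (hh : HTp N x)
    (hodd : ∃ k : ℤ, LamForm N x x = 2*(k:ℚ)+1) : N % 8 = 6 := by
  obtain ⟨a, b, _, hq⟩ := q_half hN hx hh
  obtain ⟨k, hk⟩ := hodd
  rw [hq] at hk
  have h4 : (N:ℚ) = 8*(b:ℚ) - 8*(k:ℚ) - 2 := by linarith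
  have h5 : (N:ℤ) = 8*b - 8*k - 2 := by exact_mod_cast h4
  omega

lemma odd_norm_int (hN : 3 ≤ N) {x : Fin (N+2) → ℚ} (hx : Dual N x) (h8 : N % 8 ≠ 6)
    (hodd : ∃ k : ℤ, LamForm N x x = 2*(k:ℚ)+1) :
    ITp N x ∧ ∃ a : ℤ, SD N x = 2*(a:ℚ)+1 := by
  rcases dual_cases hN hx with hi | hh
  · obtain ⟨a, b, hsd, hq, hpar⟩ := q_int hN hx hi
    obtain ⟨k, hk⟩ := hodd
    have hb : b = 2*k+1 := by
      have : (b:ℚ) = 2*(k:ℚ)+1 := by rw [← hq, hk]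
      exact_mod_cast this
    have ha : ∃ c : ℤ, a = 2*c+1 := ⟨(a-1)/2, by omega⟩
    obtain ⟨c, hc⟩ := ha
    exact ⟨hi, ⟨c, by rw [hsd, hc]; push_cast; ring⟩⟩
  · exact absurd (half_mod8 hN hx hh hodd) h8

/-! congruences -/

def Cong (N : ℕ) (x y : Fin (N+2) → ℚ) : Prop := x - y ∈ LamSet N

lemma cong_refl (x : Fin (N+2) → ℚ) : Cong N x x := by
  unfold Cong; simpa using lam_zero

lemma cong_symm {x y : Fin (N+2) → ℚ} (h : Cong N x y) : Cong N y x := by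
  unfold Cong at *
  have := lam_neg h
  simpa using this

lemma cong_trans {x y z : Fin (N+2) → ℚ} (h : Cong N x y) (h' : Cong N y z) : Cong N x z := by
  unfold Cong at *
  have := lam_add h h'
  simpa using this

lemma cong_add {x y z w : Fin (N+2) → ℚ} (h : Cong N x y) (h' : Cong N z w) :
    Cong N (x + z) (y + w) := by
  unfold Cong at *
  have := lam_add h h'
  simpa [sub_add_sub_comm] using this

lemma cong_smul_int (k : ℤ) {x y : Fin (N+2) → ℚ} (h : Cong N x y) :
    Cong N ((k:ℚ) • x) ((k:ℚ) • y) := by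
  unfold Cong at *
  have := lam_smul_int k h
  simpa [smul_sub] using this

lemma cong_zero_iff {x : Fin (N+2) → ℚ} : Cong N x 0 ↔ x ∈ LamSet N := by
  unfold Cong; simp

lemma cong_of_mem {x : Fin (N+2) → ℚ} (h : x ∈ LamSet N) : Cong N x 0 := cong_zero_iff.2 h

lemma cong_neg {x y : Fin (N+2) → ℚ} (h : Cong N x y) : Cong N (-x) (-y) := by
  have := cong_smul_int (-1) h
  simpa using this

/-- the four standard representatives -/
lemma dual_decomp (hN : 3 ≤ N) {x : Fin (N+2) → ℚ} (hx : Dual N x) :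
    Cong N x 0 ∨ Cong N x (ev N (N+1)) ∨ Cong N x (hv N) ∨ Cong N x (hv N + ev N (N+1)) := by
  have hL : 4 ≤ N+1 := by omega
  have key : ∀ z : Fin (N+2) → ℚ, Dual N z → ITp N z →
      Cong N z 0 ∨ Cong N z (ev N (N+1)) := by
    intro z hz hzi
    have hall := dual_int_all hN hz hzi
    have hsd : ZI (SD N z) := ZI.sum _ _ fun i _ => by
      by_cases hi : 4 ≤ (i:ℕ)
      · simpa [hi] using hall i
      · simpa [hi] using ZI.zero
    obtain ⟨a, ha⟩ := hsd
    rcases Int.even_or_odd a with ⟨b, hb⟩ | ⟨b, hb⟩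
    · left
      refine cong_of_mem (mem_lam.2 ⟨hall, ⟨b, ?_⟩⟩)
      rw [ha, hb]; push_cast; ring
    · right
      unfold Cong
      rw [mem_lam]
      refine ⟨fun i => (hall i).sub (ev_int _ i), ⟨b, ?_⟩⟩
      rw [SD_sub, ha, SD_ev_big hL (by omega), hb]; push_cast; ring
  rcases dual_cases hN hx with hi | hh
  · rcases key x hx hi with h | h
    · exact Or.inl h
    · exact Or.inr (Or.inl h)
  · have hyd : Dual N (x - hv N) := dual_sub hx (dual_hv hN)
    have hyi : ITp N (x - hv N) := fun i hi => by
      have h := hh i hi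
      have hhv : hv N i = 1/2 := by simp [hv, hi]
      simpa [Pi.sub_apply, hhv] using h
    rcases key _ hyd hyi with h | h
    · right; right; left
      unfold Cong at h ⊢
      simpa using h
    · right; right; right
      unfold Cong at h ⊢
      have : x - (hv N + ev N (N+1)) = x - hv N - ev N (N+1) := by ring
      rw [this]
      exact h


variable {N : ℕ}

def CV (x : Fin (N+2) → ℚ) : Fin (N+2) → ℝ := fun i => (x i : ℝ)

def FR (N : ℕ) (x y : Fin (N+2) → ℝ) : ℝ :=
  x 0 * y 1 + x 1 * y 0 + x 2 * y 3 + x 3 * y 2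
    - ∑ i : Fin (N+2), (if 4 ≤ (i:ℕ) then x i * y i else 0)

lemma FR_add_left (x y z : Fin (N+2) → ℝ) :
    FR N (x + y) z = FR N x z + FR N y z := by
  unfold FR
  have h : (∑ i : Fin (N+2), if 4 ≤ (i:ℕ) then (x + y) i * z i else 0)
      = (∑ i : Fin (N+2), if 4 ≤ (i:ℕ) then x i * z i else 0)
        + (∑ i : Fin (N+2), if 4 ≤ (i:ℕ) then y i * z i else 0) := by
    rw [← Finset.sum_add_distrib]
    refine Finset.sum_congr rfl fun i _ => ?_
    by_cases hi : 4 ≤ (i:ℕ)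
    · simp only [hi, if_true, Pi.add_apply]; ring
    · simp [hi]
  rw [h]
  simp only [Pi.add_apply]; ring

lemma FR_smul_left (c : ℝ) (x y : Fin (N+2) → ℝ) :
    FR N (c • x) y = c * FR N x y := by
  unfold FR
  have h : (∑ i : Fin (N+2), if 4 ≤ (i:ℕ) then (c • x) i * y i else 0)
      = c * (∑ i : Fin (N+2), if 4 ≤ (i:ℕ) then x i * y i else 0) := by
    rw [Finset.mul_sum]
    refine Finset.sum_congr rfl fun i _ => ?_
    by_cases hi : 4 ≤ (i:ℕ)
    · simp only [hi, if_true, Pi.smul_apply, smul_eq_mul]; ring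
    · simp [hi]
  rw [h]
  simp only [Pi.smul_apply, smul_eq_mul]; ring

lemma FR_comm (x y : Fin (N+2) → ℝ) : FR N x y = FR N y x := by
  unfold FR
  have h : (∑ i : Fin (N+2), if 4 ≤ (i:ℕ) then x i * y i else 0)
      = (∑ i : Fin (N+2), if 4 ≤ (i:ℕ) then y i * x i else 0) :=
    Finset.sum_congr rfl fun i _ => by split <;> ring
  rw [h]; ring

lemma FR_add_right (x y z : Fin (N+2) → ℝ) :
    FR N x (y + z) = FR N x y + FR N x z := by
  rw [FR_comm, FR_add_left, FR_comm y x, FR_comm z x]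

lemma FR_smul_right (c : ℝ) (x y : Fin (N+2) → ℝ) :
    FR N x (c • y) = c * FR N x y := by
  rw [FR_comm, FR_smul_left, FR_comm y x]

lemma FR_cast (x y : Fin (N+2) → ℚ) : FR N (CV x) (CV y) = ((LamForm N x y : ℚ) : ℝ) := by
  have hs : ((∑ i : Fin (N+2), if 4 ≤ (i:ℕ) then x i * y i else 0 : ℚ) : ℝ)
      = ∑ i : Fin (N+2), (if 4 ≤ (i:ℕ) then (x i : ℝ) * (y i : ℝ) else 0) := by
    push_cast
    refine Finset.sum_congr rfl fun i _ => ?_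
    by_cases h4 : 4 ≤ (i:ℕ) <;> simp [h4]
  unfold FR LamForm CV
  push_cast
  rw [← hs]
  push_cast
  ring

lemma FR_negdef (hN : 3 ≤ N) (z : Fin (N+2) → ℝ)
    (hp : FR N z (CV (pPos N)) = 0) (hq : FR N z (CV (qPos N)) = 0) :
    FR N z z ≤ 0 := by
  have hp0 : CV (pPos N) 0 = 1 := by simp [CV, pPos, val0]
  have hp1 : CV (pPos N) 1 = 1 := by simp [CV, pPos, val1]
  have hp2 : CV (pPos N) 2 = 0 := by simp [CV, pPos, val2 hN, val2m hN]
  have hp3 : CV (pPos N) 3 = 0 := by simp [CV, pPos, val3 hN, val3m hN]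
  have hq0 : CV (qPos N) 0 = 0 := by simp [CV, qPos, val0]
  have hq1 : CV (qPos N) 1 = 0 := by simp [CV, qPos, val1]
  have hq2 : CV (qPos N) 2 = 1 := by simp [CV, qPos, val2 hN, val2m hN]
  have hq3 : CV (qPos N) 3 = 1 := by simp [CV, qPos, val3 hN, val3m hN]
  have hps : (∑ i : Fin (N+2), if 4 ≤ (i:ℕ) then z i * CV (pPos N) i else 0) = 0 :=
    Finset.sum_eq_zero fun i _ => by
      by_cases hi : 4 ≤ (i:ℕ)
      · have h : ¬((i:ℕ) = 0 ∨ (i:ℕ) = 1) := by omega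
        simp only [CV, pPos, hi, h, ↓reduceIte, Rat.cast_zero, mul_zero]
      · simp [hi]
  have hqs : (∑ i : Fin (N+2), if 4 ≤ (i:ℕ) then z i * CV (qPos N) i else 0) = 0 :=
    Finset.sum_eq_zero fun i _ => by
      by_cases hi : 4 ≤ (i:ℕ)
      · have h : ¬((i:ℕ) = 2 ∨ (i:ℕ) = 3) := by omega
        simp [CV, qPos, hi, h]
      · simp [hi]
  unfold FR at hp hq
  rw [hps, hp0, hp1, hp2, hp3] at hp
  rw [hqs, hq0, hq1, hq2, hq3] at hq
  have h01 : z 1 = - z 0 := by linarith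
  have h23 : z 3 = - z 2 := by linarith
  have hsum : 0 ≤ ∑ i : Fin (N+2), (if 4 ≤ (i:ℕ) then z i * z i else 0) :=
    Finset.sum_nonneg fun i _ => by
      by_cases hi : 4 ≤ (i:ℕ)
      · simpa [hi] using mul_self_nonneg (z i)
      · simp [hi]
  unfold FR
  rw [h01, h23]
  nlinarith [sq_nonneg (z 0), sq_nonneg (z 2)]

lemma kernel2 (P Q R S : ℝ) (hdet : P * S - Q * R = 0) :
    ∃ v1 v2 : ℝ, P * v1 + Q * v2 = 0 ∧ R * v1 + S * v2 = 0 ∧ 0 < v1^2 + v2^2 := by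
  by_cases hPQ : P = 0 ∧ Q = 0
  · by_cases hRS : R = 0 ∧ S = 0
    · exact ⟨1, 0, by rw [hPQ.1, hPQ.2]; ring, by rw [hRS.1, hRS.2]; ring, by norm_num⟩
    · refine ⟨S, -R, by rw [hPQ.1, hPQ.2]; ring, by ring, ?_⟩
      rcases not_and_or.mp hRS with h | h
      · have h1 : 0 < R^2 := by positivity
        nlinarith [sq_nonneg S]
      · have h1 : 0 < S^2 := by positivity
        nlinarith [sq_nonneg R]
  · refine ⟨Q, -P, by ring, by linear_combination -hdet, ?_⟩
    rcases not_and_or.mp hPQ with h | h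
    · have h1 : 0 < P^2 := by positivity
      nlinarith [sq_nonneg Q]
    · have h1 : 0 < Q^2 := by positivity
      nlinarith [sq_nonneg P]

lemma posdet_key (hN : 3 ≤ N)
    (g h : (Fin (N+2) → ℚ) ≃ₗ[ℚ] (Fin (N+2) → ℚ))
    (hg : ∀ x y, LamForm N (g x) (g y) = LamForm N x y)
    (hh : ∀ x y, LamForm N (h x) (h y) = LamForm N x y) :
    posdet (LamForm N) (pPos N) (qPos N) (⇑g ∘ ⇑h) ≠ 0 ∧
    0 < posdet (LamForm N) (pPos N) (qPos N) ⇑g * posdet (LamForm N) (pPos N) (qPos N) ⇑h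
        * posdet (LamForm N) (pPos N) (qPos N) (⇑g ∘ ⇑h) := by
  have hBpp := form_pp hN
  have hBpq := form_pq hN
  have hBqp := form_qp hN
  have hBqq := form_qq hN
  set a1 : Fin (N+2) → ℚ := (LamForm N (h (pPos N)) (pPos N)/2) • pPos N
      + (LamForm N (h (pPos N)) (qPos N)/2) • qPos N with ha1
  set a2 : Fin (N+2) → ℚ := (LamForm N (h (qPos N)) (pPos N)/2) • pPos N
      + (LamForm N (h (qPos N)) (qPos N)/2) • qPos N with ha2
  set b1 : Fin (N+2) → ℚ := h (pPos N) - a1 with hb1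
  set b2 : Fin (N+2) → ℚ := h (qPos N) - a2 with hb2
  -- symmetry and isometry facts
  have c1 : LamForm N (pPos N) (h (pPos N)) = LamForm N (h (pPos N)) (pPos N) := form_comm _ _
  have c2 : LamForm N (qPos N) (h (pPos N)) = LamForm N (h (pPos N)) (qPos N) := form_comm _ _
  have c3 : LamForm N (pPos N) (h (qPos N)) = LamForm N (h (qPos N)) (pPos N) := form_comm _ _
  have c4 : LamForm N (qPos N) (h (qPos N)) = LamForm N (h (qPos N)) (qPos N) := form_comm _ _
  have c5 : LamForm N (h (qPos N)) (h (pPos N)) = LamForm N (h (pPos N)) (h (qPos N)) :=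
    form_comm _ _
  have i1 : LamForm N (h (pPos N)) (h (pPos N)) = 2 := by rw [hh]; exact hBpp
  have i2 : LamForm N (h (pPos N)) (h (qPos N)) = 0 := by rw [hh]; exact hBpq
  have i3 : LamForm N (h (qPos N)) (h (qPos N)) = 2 := by rw [hh]; exact hBqq
  -- pairings of the b's with p and q
  have hbp1 : LamForm N b1 (pPos N) = 0 := by
    simp only [hb1, ha1, form_sub_left, form_add_left, form_smul_left, hBpp, hBqp]; ring
  have hbq1 : LamForm N b1 (qPos N) = 0 := by
    simp only [hb1, ha1, form_sub_left, form_add_left, form_smul_left, hBpq, hBqq]; ring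
  have hbp2 : LamForm N b2 (pPos N) = 0 := by
    simp only [hb2, ha2, form_sub_left, form_add_left, form_smul_left, hBpp, hBqp]; ring
  have hbq2 : LamForm N b2 (qPos N) = 0 := by
    simp only [hb2, ha2, form_sub_left, form_add_left, form_smul_left, hBpq, hBqq]; ring
  -- the polynomial
  set f : ℝ → ℝ := fun s =>
    (((LamForm N (g a1) (pPos N) : ℚ) : ℝ) + s * ((LamForm N (g b1) (pPos N) : ℚ) : ℝ))
      * (((LamForm N (g a2) (qPos N) : ℚ) : ℝ) + s * ((LamForm N (g b2) (qPos N) : ℚ) : ℝ))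
    - (((LamForm N (g a2) (pPos N) : ℚ) : ℝ) + s * ((LamForm N (g b2) (pPos N) : ℚ) : ℝ))
      * (((LamForm N (g a1) (qPos N) : ℚ) : ℝ) + s * ((LamForm N (g b1) (qPos N) : ℚ) : ℝ))
    with hf
  have hcont : Continuous f := by rw [hf]; fun_prop
  -- nonvanishing on [0,1]
  have hne : ∀ t ∈ Set.Icc (0:ℝ) 1, f t ≠ 0 := by
    intro t ht hft
    have hft' : (((LamForm N (g a1) (pPos N) : ℚ) : ℝ) + t * ((LamForm N (g b1) (pPos N) : ℚ) : ℝ))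
        * (((LamForm N (g a2) (qPos N) : ℚ) : ℝ) + t * ((LamForm N (g b2) (qPos N) : ℚ) : ℝ))
      - (((LamForm N (g a2) (pPos N) : ℚ) : ℝ) + t * ((LamForm N (g b2) (pPos N) : ℚ) : ℝ))
        * (((LamForm N (g a1) (qPos N) : ℚ) : ℝ) + t * ((LamForm N (g b1) (qPos N) : ℚ) : ℝ)) = 0 := by
      rw [hf] at hft; exact hft
    obtain ⟨v1, v2, hv1, hv2, hv⟩ := kernel2
      (((LamForm N (g a1) (pPos N) : ℚ) : ℝ) + t * ((LamForm N (g b1) (pPos N) : ℚ) : ℝ))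
      (((LamForm N (g a2) (pPos N) : ℚ) : ℝ) + t * ((LamForm N (g b2) (pPos N) : ℚ) : ℝ))
      (((LamForm N (g a1) (qPos N) : ℚ) : ℝ) + t * ((LamForm N (g b1) (qPos N) : ℚ) : ℝ))
      (((LamForm N (g a2) (qPos N) : ℚ) : ℝ) + t * ((LamForm N (g b2) (qPos N) : ℚ) : ℝ))
      (by linear_combination hft')
    set zb : Fin (N+2) → ℝ := v1 • CV b1 + v2 • CV b2 with hzb
    set z : Fin (N+2) → ℝ := v1 • CV a1 + v2 • CV a2 + (t*v1) • CV b1 + (t*v2) • CV b2 with hz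
    set Z : Fin (N+2) → ℝ := v1 • CV (g a1) + v2 • CV (g a2)
        + (t*v1) • CV (g b1) + (t*v2) • CV (g b2) with hZ
    have hzbp : FR N zb (CV (pPos N)) = 0 := by
      simp only [hzb, FR_add_left, FR_smul_left, FR_cast, hbp1, hbp2]
      simp
    have hzbq : FR N zb (CV (qPos N)) = 0 := by
      simp only [hzb, FR_add_left, FR_smul_left, FR_cast, hbq1, hbq2]
      simp
    have hQB : FR N zb zb ≤ 0 := FR_negdef hN zb hzbp hzbq
    have hZp : FR N Z (CV (pPos N)) = 0 := by
      simp only [hZ, FR_add_left, FR_smul_left, FR_cast]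
      linear_combination hv1
    have hZq : FR N Z (CV (qPos N)) = 0 := by
      simp only [hZ, FR_add_left, FR_smul_left, FR_cast]
      linear_combination hv2
    have hZneg : FR N Z Z ≤ 0 := FR_negdef hN Z hZp hZq
    have hzZ : FR N Z Z = FR N z z := by
      simp only [hZ, hz, FR_add_left, FR_add_right, FR_smul_left, FR_smul_right, FR_cast, hg]
      try ring
    have hzval : FR N z z = 2*(v1^2+v2^2) + (t^2 - 1) * FR N zb zb := by
      simp only [hz, hzb, FR_add_left, FR_add_right, FR_smul_left, FR_smul_right, FR_cast,
        hb1, hb2, ha1, ha2, form_sub_left, form_sub_right, form_add_left, form_add_right,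
        form_smul_left, form_smul_right, c1, c2, c3, c4, c5, i1, i2, i3,
        hBpp, hBpq, hBqp, hBqq]
      push_cast
      ring
    have ht2 : 0 ≤ 1 - t^2 := by nlinarith [ht.1, ht.2]
    have hpos : 0 < FR N z z := by
      rw [hzval]
      nlinarith [mul_nonneg ht2 (neg_nonneg.mpr hQB)]
    rw [hzZ] at hZneg
    linarith
  -- endpoints
  have hf1 : f 1 = ((posdet (LamForm N) (pPos N) (qPos N) (⇑g ∘ ⇑h) : ℚ) : ℝ) := by
    have hs1 : g (h (pPos N)) = g a1 + g b1 := by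
      rw [← map_add]; congr 1; funext i; simp [hb1]
    have hs2 : g (h (qPos N)) = g a2 + g b2 := by
      rw [← map_add]; congr 1; funext i; simp [hb2]
    unfold posdet
    simp only [Function.comp_apply, hs1, hs2, form_add_left]
    push_cast
    ring
  have hf0 : f 0 = ((posdet (LamForm N) (pPos N) (qPos N) ⇑g
      * posdet (LamForm N) (pPos N) (qPos N) ⇑h : ℚ) : ℝ) / 4 := by
    have hga1 : g a1 = (LamForm N (h (pPos N)) (pPos N)/2) • g (pPos N)
        + (LamForm N (h (pPos N)) (qPos N)/2) • g (qPos N) := by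
      rw [ha1, map_add, map_smul, map_smul]
    have hga2 : g a2 = (LamForm N (h (qPos N)) (pPos N)/2) • g (pPos N)
        + (LamForm N (h (qPos N)) (qPos N)/2) • g (qPos N) := by
      rw [ha2, map_add, map_smul, map_smul]
    unfold posdet
    simp only [hf, hga1, hga2, form_add_left, form_smul_left]
    push_cast
    ring
  -- sign of f0 * f1
  have hprod : 0 < f 0 * f 1 := by
    rcases lt_trichotomy (f 0 * f 1) 0 with hlt | heq | hgt
    · exfalso
      have h0ne := hne 0 (by norm_num)
      have h1ne := hne 1 (by norm_num)
      rcases mul_neg_iff.mp hlt with ⟨hpos0, hneg1⟩ | ⟨hneg0, hpos1⟩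
      · obtain ⟨s, hs, hroot⟩ := intermediate_value_Icc' (by norm_num : (0:ℝ) ≤ 1)
          hcont.continuousOn ⟨hneg1.le, hpos0.le⟩
        exact hne s hs hroot
      · obtain ⟨s, hs, hroot⟩ := intermediate_value_Icc (by norm_num : (0:ℝ) ≤ 1)
          hcont.continuousOn ⟨hneg0.le, hpos1.le⟩
        exact hne s hs hroot
    · exfalso
      rcases mul_eq_zero.mp heq with h | h
      · exact hne 0 (by norm_num) h
      · exact hne 1 (by norm_num) h
    · exact hgt
  constructor
  · intro hzero
    have := hne 1 (by norm_num)
    rw [hf1] at this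
    exact this (by exact_mod_cast congrArg (fun r : ℚ => (r : ℝ)) hzero)
  · have h4 : (0:ℝ) < ((posdet (LamForm N) (pPos N) (qPos N) ⇑g
        * posdet (LamForm N) (pPos N) (qPos N) ⇑h
        * posdet (LamForm N) (pPos N) (qPos N) (⇑g ∘ ⇑h) : ℚ) : ℝ) := by
      have := hprod
      rw [hf0, hf1] at this
      push_cast
      push_cast at this
      nlinarith [this]
    exact_mod_cast h4


variable {N : ℕ}

lemma isom_symm (g : (Fin (N+2) → ℚ) ≃ₗ[ℚ] (Fin (N+2) → ℚ))
    (hg : ∀ x y, LamForm N (g x) (g y) = LamForm N x y) :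
    ∀ x y, LamForm N (g.symm x) (g.symm y) = LamForm N x y := by
  intro x y
  have h := hg (g.symm x) (g.symm y)
  simpa using h.symm

lemma posdet_ne_zero (hN : 3 ≤ N) (g : (Fin (N+2) → ℚ) ≃ₗ[ℚ] (Fin (N+2) → ℚ))
    (hg : ∀ x y, LamForm N (g x) (g y) = LamForm N x y) :
    posdet (LamForm N) (pPos N) (qPos N) ⇑g ≠ 0 := by
  have h := (posdet_key hN g (LinearEquiv.refl ℚ _) hg (by intro x y; simp)).1
  have he : ⇑g ∘ ⇑(LinearEquiv.refl ℚ (Fin (N+2) → ℚ)) = ⇑g := by funext x; simp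
  rwa [he] at h

lemma posdet_symm_pos (hN : 3 ≤ N) (g : (Fin (N+2) → ℚ) ≃ₗ[ℚ] (Fin (N+2) → ℚ))
    (hg : ∀ x y, LamForm N (g x) (g y) = LamForm N x y)
    (hpd : 0 < posdet (LamForm N) (pPos N) (qPos N) ⇑g) :
    0 < posdet (LamForm N) (pPos N) (qPos N) ⇑g.symm := by
  have h2 := (posdet_key hN g g.symm hg (isom_symm g hg)).2
  have hcomp : posdet (LamForm N) (pPos N) (qPos N) (⇑g ∘ ⇑g.symm) = 4 := by
    unfold posdet
    simp [Function.comp, form_pp hN, form_qq hN, form_pq hN, form_qp hN]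
    norm_num
  rw [hcomp] at h2
  by_contra hle
  push_neg at hle
  have hne := posdet_ne_zero hN g.symm (isom_symm g hg)
  have hlt : posdet (LamForm N) (pPos N) (qPos N) ⇑g.symm < 0 := lt_of_le_of_ne hle hne
  nlinarith

lemma op_comp (hN : 3 ≤ N) {g h : (Fin (N+2) → ℚ) ≃ₗ[ℚ] (Fin (N+2) → ℚ)}
    (hgo : InOp N g) (hho : InOp N h) : InOp N (h.trans g) := by
  obtain ⟨hg1, hg2, hg3⟩ := hgo
  obtain ⟨hh1, hh2, hh3⟩ := hho
  refine ⟨?_, ?_, ?_⟩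
  · intro x y
    simp only [LinearEquiv.trans_apply, hg1, hh1]
  · intro x
    rw [hh2 x, hg2 (h x)]
    simp only [LinearEquiv.trans_apply]
  · have hk := (posdet_key hN g h hg1 hh1).2
    have he : ⇑(h.trans g) = ⇑g ∘ ⇑h := rfl
    rw [he]
    nlinarith [mul_pos hg3 hh3, hk]

lemma op_symm (hN : 3 ≤ N) {g : (Fin (N+2) → ℚ) ≃ₗ[ℚ] (Fin (N+2) → ℚ)}
    (hgo : InOp N g) : InOp N g.symm := by
  obtain ⟨hg1, hg2, hg3⟩ := hgo
  refine ⟨isom_symm g hg1, ?_, posdet_symm_pos hN g hg1 hg3⟩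
  intro x
  constructor
  · intro hx
    have := (hg2 (g.symm x)).2
    apply this
    simpa using hx
  · intro hx
    have := (hg2 (g.symm x)).1 hx
    simpa using this

lemma op_trans_symm (hN : 3 ≤ N) {g h : (Fin (N+2) → ℚ) ≃ₗ[ℚ] (Fin (N+2) → ℚ)}
    (hgo : InOp N g) (hho : InOp N h) : InOp N (h.trans g.symm) :=
  op_comp hN (op_symm hN hgo) hho

lemma op_dual {g : (Fin (N+2) → ℚ) ≃ₗ[ℚ] (Fin (N+2) → ℚ)} (hgo : InOp N g)
    {x : Fin (N+2) → ℚ} (hx : Dual N x) : Dual N (g x) := by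
  intro y hy
  have h1 : g.symm y ∈ LamSet N := by
    apply (hgo.2.1 (g.symm y)).2
    simpa using hy
  obtain ⟨a, ha⟩ := hx _ h1
  refine ⟨a, ?_⟩
  have h2 : LamForm N (g x) y = LamForm N (g x) (g (g.symm y)) := by simp
  rw [h2, hgo.1, ha]

lemma op_cong {g : (Fin (N+2) → ℚ) ≃ₗ[ℚ] (Fin (N+2) → ℚ)} (hgo : InOp N g)
    {x y : Fin (N+2) → ℚ} (h : Cong N x y) : Cong N (g x) (g y) := by
  unfold Cong at *
  rw [← map_sub]
  exact (hgo.2.1 _).1 h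

lemma op_cong_rev {g : (Fin (N+2) → ℚ) ≃ₗ[ℚ] (Fin (N+2) → ℚ)} (hgo : InOp N g)
    {x y : Fin (N+2) → ℚ} (h : Cong N (g x) (g y)) : Cong N x y := by
  unfold Cong at *
  apply (hgo.2.1 (x - y)).2
  rw [map_sub]
  exact h

lemma op_mem_rev {g : (Fin (N+2) → ℚ) ≃ₗ[ℚ] (Fin (N+2) → ℚ)} (hgo : InOp N g)
    {x : Fin (N+2) → ℚ} (h : g x ∈ LamSet N) : x ∈ LamSet N := (hgo.2.1 x).2 h

lemma triv_of_reps (hN : 3 ≤ N) {φ : (Fin (N+2) → ℚ) ≃ₗ[ℚ] (Fin (N+2) → ℚ)}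
    (hφ : InOp N φ)
    (hhv : Cong N (φ (hv N)) (hv N)) (heL : Cong N (φ (ev N (N+1))) (ev N (N+1))) :
    ∀ x, Dual N x → φ x - x ∈ LamSet N := by
  intro x hx
  have key : ∀ r, Cong N x r → Cong N (φ r) r → φ x - x ∈ LamSet N := by
    intro r hr hφr
    have h1 : x - r ∈ LamSet N := hr
    have h2 : φ (x - r) ∈ LamSet N := (hφ.2.1 _).1 h1
    have h3 : φ x - x = (φ (x - r) - (x - r)) + (φ r - r) := by
      rw [map_sub]; funext i; simp; ring
    rw [h3]; exact lam_add (lam_sub h2 h1) hφr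
  rcases dual_decomp hN hx with h | h | h | h
  · refine key 0 h ?_
    rw [map_zero]; exact cong_refl 0
  · exact key _ h heL
  · exact key _ h hhv
  · refine key _ h ?_
    rw [map_add]
    exact cong_add hhv heL

/-! reflections -/

def rfle (N : ℕ) (s : Fin (N+2) → ℚ) (hs : LamForm N s s = -1) :
    (Fin (N+2) → ℚ) ≃ₗ[ℚ] (Fin (N+2) → ℚ) where
  toFun x := x + (2 * LamForm N s x) • s
  map_add' x y := by
    show (x + y) + (2 * LamForm N s (x + y)) • s
        = (x + (2 * LamForm N s x) • s) + (y + (2 * LamForm N s y) • s)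
    rw [form_add_right]
    funext i
    simp
    ring
  map_smul' c x := by
    show (c • x) + (2 * LamForm N s (c • x)) • s = c • (x + (2 * LamForm N s x) • s)
    rw [form_smul_right]
    funext i
    simp
    ring
  invFun x := x + (2 * LamForm N s x) • s
  left_inv x := by
    show (x + (2 * LamForm N s x) • s) + (2 * LamForm N s (x + (2 * LamForm N s x) • s)) • s = x
    rw [form_add_right, form_smul_right, hs]
    funext i
    simp
    ring
  right_inv x := by
    show (x + (2 * LamForm N s x) • s) + (2 * LamForm N s (x + (2 * LamForm N s x) • s)) • s = x
    rw [form_add_right, form_smul_right, hs]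
    funext i
    simp
    ring

lemma rfle_apply (s : Fin (N+2) → ℚ) (hs : LamForm N s s = -1) (x : Fin (N+2) → ℚ) :
    rfle N s hs x = x + (2 * LamForm N s x) • s := rfl

lemma rfle_symm_apply (s : Fin (N+2) → ℚ) (hs : LamForm N s s = -1) (x : Fin (N+2) → ℚ) :
    (rfle N s hs).symm x = x + (2 * LamForm N s x) • s := rfl

lemma rfle_form (s : Fin (N+2) → ℚ) (hs : LamForm N s s = -1) :
    ∀ x y, LamForm N (rfle N s hs x) (rfle N s hs y) = LamForm N x y := by
  intro x y
  have hc : LamForm N x s = LamForm N s x := form_comm _ _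
  simp only [rfle_apply, form_add_left, form_add_right, form_smul_left, form_smul_right, hs, hc]
  ring

lemma rfle_mem (s : Fin (N+2) → ℚ) (hs : LamForm N s s = -1)
    (hsd : Dual N s) (hr : (2:ℚ) • s ∈ LamSet N) :
    ∀ x, x ∈ LamSet N ↔ rfle N s hs x ∈ LamSet N := by
  have fwd : ∀ x, x ∈ LamSet N → rfle N s hs x ∈ LamSet N := by
    intro x hx
    obtain ⟨k, hk⟩ := hsd x hx
    have he : rfle N s hs x = x + (k:ℚ) • ((2:ℚ) • s) := by
      rw [rfle_apply]
      funext i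
      simp [hk]
      ring
    rw [he]
    exact lam_add hx (lam_smul_int k hr)
  intro x
  constructor
  · exact fwd x
  · intro hx
    have hinv : rfle N s hs (rfle N s hs x) = x := by
      rw [rfle_apply, rfle_apply, form_add_right, form_smul_right, hs]
      funext i
      simp
      ring
    have := fwd _ hx
    rwa [hinv] at this

lemma rfle_posdet (hN : 3 ≤ N) (s : Fin (N+2) → ℚ) (hs : LamForm N s s = -1) :
    0 < posdet (LamForm N) (pPos N) (qPos N) ⇑(rfle N s hs) := by
  unfold posdet
  simp only [rfle_apply, form_add_left, form_smul_left, form_pp hN, form_pq hN,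
    form_qp hN, form_qq hN]
  nlinarith [sq_nonneg (LamForm N s (pPos N)), sq_nonneg (LamForm N s (qPos N)),
    sq_nonneg (LamForm N s (pPos N) * LamForm N s (qPos N))]

lemma rfle_op (hN : 3 ≤ N) (s : Fin (N+2) → ℚ) (hs : LamForm N s s = -1)
    (hsd : Dual N s) (hr : (2:ℚ) • s ∈ LamSet N) : InOp N (rfle N s hs) :=
  ⟨rfle_form s hs, rfle_mem s hs hsd hr, rfle_posdet hN s hs⟩

lemma rfle_cong_even (s : Fin (N+2) → ℚ) (hs : LamForm N s s = -1)
    (hr : (2:ℚ) • s ∈ LamSet N) (x : Fin (N+2) → ℚ) (m : ℤ)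
    (hk : 2 * LamForm N s x = 2*(m:ℚ)) : Cong N (rfle N s hs x) x := by
  unfold Cong
  have he : rfle N s hs x - x = (m:ℚ) • ((2:ℚ) • s) := by
    rw [rfle_apply]
    funext i
    simp [hk]
    ring
  rw [he]
  exact lam_smul_int m hr

lemma rfle_cong_odd (s : Fin (N+2) → ℚ) (hs : LamForm N s s = -1)
    (hr : (2:ℚ) • s ∈ LamSet N) (x : Fin (N+2) → ℚ) (m : ℤ)
    (hk : 2 * LamForm N s x = 2*(m:ℚ)+1) : Cong N (rfle N s hs x) (x + s) := by
  unfold Cong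
  have he : rfle N s hs x - (x + s) = (m:ℚ) • ((2:ℚ) • s) := by
    rw [rfle_apply]
    funext i
    simp [hk]
    ring
  rw [he]
  exact lam_smul_int m hr


variable {N : ℕ}

/-! explicit pairing values -/

lemma hv_coord4 (hN : 3 ≤ N) : hv N ⟨4, by omega⟩ = 1/2 := by simp [hv]

lemma eL_eval (hN : 3 ≤ N) {i : Fin (N+2)} : ev N (N+1) i = if (i:ℕ) = N+1 then 1 else 0 := rfl

lemma SD_eL (hN : 3 ≤ N) : SD N (ev N (N+1)) = 1 := SD_ev_big (by omega) (by omega)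

lemma eLeL (hN : 3 ≤ N) : LamForm N (ev N (N+1)) (ev N (N+1)) = -1 := by
  rw [form_eD hN (by omega) (by omega)]
  simp [ev]

lemma hveL (hN : 3 ≤ N) : LamForm N (hv N) (ev N (N+1)) = -(1/2) := by
  rw [form_hv hN, SD_eL hN]; norm_num

lemma eLhv (hN : 3 ≤ N) : LamForm N (ev N (N+1)) (hv N) = -(1/2) := by
  rw [form_comm]; exact hveL hN

lemma hvhv (hN : 3 ≤ N) : LamForm N (hv N) (hv N) = -(((N:ℚ)-2)/4) := by
  rw [form_hv hN, SD_hv hN]; ring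

lemma e0e1 (hN : 3 ≤ N) : LamForm N (ev N 0) (ev N 1) = 1 := by
  rw [form_e0 hN]; simp [ev, val1]

lemma e1e0 (hN : 3 ≤ N) : LamForm N (ev N 1) (ev N 0) = 1 := by
  rw [form_e1 hN]; simp [ev, val0]

lemma e0e0 (hN : 3 ≤ N) : LamForm N (ev N 0) (ev N 0) = 0 := by
  rw [form_e0 hN]; simp [ev, val1]

lemma e1e1 (hN : 3 ≤ N) : LamForm N (ev N 1) (ev N 1) = 0 := by
  rw [form_e1 hN]; simp [ev, val0]

lemma e0hv (hN : 3 ≤ N) : LamForm N (ev N 0) (hv N) = 0 := by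
  rw [form_e0 hN]; simp [hv, val1]

lemma e1hv (hN : 3 ≤ N) : LamForm N (ev N 1) (hv N) = 0 := by
  rw [form_e1 hN]; simp [hv, val0]

lemma hve0 (hN : 3 ≤ N) : LamForm N (hv N) (ev N 0) = 0 := by
  rw [form_comm]; exact e0hv hN

lemma hve1 (hN : 3 ≤ N) : LamForm N (hv N) (ev N 1) = 0 := by
  rw [form_comm]; exact e1hv hN

lemma e0eL (hN : 3 ≤ N) : LamForm N (ev N 0) (ev N (N+1)) = 0 := by
  rw [form_e0 hN]
  have h : ¬ (1:ℕ) = N+1 := by omega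
  simp [ev, val1, h]; omega

lemma e1eL (hN : 3 ≤ N) : LamForm N (ev N 1) (ev N (N+1)) = 0 := by
  rw [form_e1 hN]
  have h : ¬ (0:ℕ) = N+1 := by omega
  simp [ev, val0, h]

lemma eLe0 (hN : 3 ≤ N) : LamForm N (ev N (N+1)) (ev N 0) = 0 := by
  rw [form_comm]; exact e0eL hN

lemma eLe1 (hN : 3 ≤ N) : LamForm N (ev N (N+1)) (ev N 1) = 0 := by
  rw [form_comm]; exact e1eL hN

/-! memberships and non-memberships -/

lemma dual_eL (hN : 3 ≤ N) : Dual N (ev N (N+1)) := dual_intvec hN (ev_int _)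

lemma two_eL_mem (hN : 3 ≤ N) : (2:ℚ) • ev N (N+1) ∈ LamSet N := by
  rw [mem_lam]
  refine ⟨fun i => by simpa using (ZI.intCast 2).mul (ev_int _ i), ⟨1, ?_⟩⟩
  rw [SD_smul, SD_eL hN]; norm_num

lemma two_hv_mem (hN : 3 ≤ N) (hNe : N % 2 = 0) : (2:ℚ) • hv N ∈ LamSet N := by
  obtain ⟨k, hk⟩ : ∃ k : ℕ, N = 2*k := ⟨N/2, by omega⟩
  rw [mem_lam]
  constructor
  · intro i
    by_cases hi : 4 ≤ (i:ℕ)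
    · refine ⟨1, ?_⟩
      simp [hv, hi]
      try norm_num
    · refine ⟨0, ?_⟩
      simp [hv, hi]
  · refine ⟨(k:ℤ) - 1, ?_⟩
    rw [SD_smul, SD_hv hN, hk]
    push_cast; ring

lemma not_mem_eL (hN : 3 ≤ N) : ev N (N+1) ∉ LamSet N := by
  intro hmem
  rw [mem_lam] at hmem
  obtain ⟨_, a, ha⟩ := hmem
  rw [SD_eL hN] at ha
  have : (1:ℤ) = 2*a := by exact_mod_cast ha
  omega

lemma not_mem_hv (hN : 3 ≤ N) : hv N ∉ LamSet N := by
  intro hmem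
  rw [mem_lam] at hmem
  have := hmem.1 ⟨4, by omega⟩
  rw [hv_coord4 hN] at this
  exact not_ZI_half this

lemma not_mem_hv_add (hN : 3 ≤ N) (c : ℚ) (hc : ZI c)
    {w : Fin (N+2) → ℚ} (hw : ∀ i, ZI (w i)) : hv N + c • w ∉ LamSet N := by
  intro hmem
  rw [mem_lam] at hmem
  have h1 := hmem.1 ⟨4, by omega⟩
  have h2 : ZI ((c • w) ⟨4, by omega⟩) := by simpa using hc.mul (hw ⟨4, by omega⟩)
  have h3 : ZI (hv N ⟨4, by omega⟩) := by
    have := h1.sub h2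
    simpa using this
  rw [hv_coord4 hN] at h3
  exact not_ZI_half h3

lemma not_mem_hv_eL (hN : 3 ≤ N) : hv N + ev N (N+1) ∉ LamSet N := by
  have h := not_mem_hv_add hN 1 ZI.one (ev_int (N+1))
  intro hmem
  apply h
  have : hv N + (1:ℚ) • ev N (N+1) = hv N + ev N (N+1) := by funext i; simp
  rwa [this]

/-! distinctness of the four classes -/

lemma ncong_hv_zero (hN : 3 ≤ N) : ¬ Cong N (hv N) 0 := by
  intro hc; rw [cong_zero_iff] at hc; exact not_mem_hv hN hc

lemma ncong_eL_zero (hN : 3 ≤ N) : ¬ Cong N (ev N (N+1)) 0 := by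
  intro hc; rw [cong_zero_iff] at hc; exact not_mem_eL hN hc

lemma ncong_hveL_zero (hN : 3 ≤ N) : ¬ Cong N (hv N + ev N (N+1)) 0 := by
  intro hc; rw [cong_zero_iff] at hc; exact not_mem_hv_eL hN hc

lemma ncong_hv_eL (hN : 3 ≤ N) : ¬ Cong N (hv N) (ev N (N+1)) := by
  intro hc
  unfold Cong at hc
  have h : hv N + (-1:ℚ) • ev N (N+1) ∈ LamSet N := by
    have he : hv N + (-1:ℚ) • ev N (N+1) = hv N - ev N (N+1) := by funext i; simp; ring
    rwa [he]
  exact not_mem_hv_add hN (-1) ⟨-1, by norm_num⟩ (ev_int (N+1)) h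

lemma ncong_hv_hveL (hN : 3 ≤ N) : ¬ Cong N (hv N) (hv N + ev N (N+1)) := by
  intro hc
  unfold Cong at hc
  have he : hv N - (hv N + ev N (N+1)) = -(ev N (N+1)) := by funext i; simp; try ring
  rw [he] at hc
  have := lam_neg hc
  simp at this
  exact not_mem_eL hN this

lemma ncong_eL_hveL (hN : 3 ≤ N) : ¬ Cong N (ev N (N+1)) (hv N + ev N (N+1)) := by
  intro hc
  unfold Cong at hc
  have he : ev N (N+1) - (hv N + ev N (N+1)) = -(hv N) := by funext i; simp; try ring
  rw [he] at hc
  have := lam_neg hc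
  simp at this
  exact not_mem_hv hN this


variable {N : ℕ}

def su (N : ℕ) : Fin (N+2) → ℚ := (((N:ℚ)-6)/8) • ev N 0 + ev N 1 + hv N
def suv (N : ℕ) : Fin (N+2) → ℚ :=
  (((N:ℚ)+2)/8) • ev N 0 + ev N 1 + hv N + ev N (N+1)

lemma norm_su (hN : 3 ≤ N) : LamForm N (su N) (su N) = -1 := by
  unfold su
  simp only [form_add_left, form_add_right, form_smul_left, form_smul_right,
    e0e0 hN, e0e1 hN, e1e0 hN, e1e1 hN, e0hv hN, e1hv hN, hve0 hN, hve1 hN, hvhv hN]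
  ring

lemma norm_suv (hN : 3 ≤ N) : LamForm N (suv N) (suv N) = -1 := by
  unfold suv
  simp only [form_add_left, form_add_right, form_smul_left, form_smul_right,
    e0e0 hN, e0e1 hN, e1e0 hN, e1e1 hN, e0hv hN, e1hv hN, hve0 hN, hve1 hN, hvhv hN,
    e0eL hN, e1eL hN, eLe0 hN, eLe1 hN, hveL hN, eLhv hN, eLeL hN]
  ring

lemma su_eL (hN : 3 ≤ N) : LamForm N (su N) (ev N (N+1)) = -(1/2) := by
  unfold su
  simp only [form_add_left, form_smul_left, e0eL hN, e1eL hN, hveL hN]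
  ring

lemma suv_eL (hN : 3 ≤ N) : LamForm N (suv N) (ev N (N+1)) = -(3/2) := by
  unfold suv
  simp only [form_add_left, form_smul_left, e0eL hN, e1eL hN, hveL hN, eLeL hN]
  ring

lemma su_hv (hN : 3 ≤ N) : LamForm N (su N) (hv N) = -(((N:ℚ)-2)/4) := by
  unfold su
  simp only [form_add_left, form_smul_left, e0hv hN, e1hv hN, hvhv hN]
  ring

lemma suv_hv (hN : 3 ≤ N) : LamForm N (suv N) (hv N) = -(((N:ℚ)-2)/4) - 1/2 := by
  unfold suv
  simp only [form_add_left, form_smul_left, e0hv hN, e1hv hN, hvhv hN, eLhv hN]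
  ring

lemma su_suv (hN : 3 ≤ N) : LamForm N (su N) (suv N) = -(1/2) := by
  unfold su suv
  simp only [form_add_left, form_add_right, form_smul_left, form_smul_right,
    e0e0 hN, e0e1 hN, e1e0 hN, e1e1 hN, e0hv hN, e1hv hN, hve0 hN, hve1 hN, hvhv hN,
    e0eL hN, e1eL hN, hveL hN]
  ring

lemma suv_su (hN : 3 ≤ N) : LamForm N (suv N) (su N) = -(1/2) := by
  rw [form_comm]; exact su_suv hN

lemma dual_su (hN : 3 ≤ N) (hN8 : N % 8 = 6) : Dual N (su N) := by
  obtain ⟨j, hj⟩ : ∃ j : ℕ, N = 8*j+6 := ⟨(N-6)/8, by omega⟩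
  have hsc : ((N:ℚ)-6)/8 = (((j:ℤ)):ℚ) := by rw [hj]; push_cast; ring
  have he : su N = (((j:ℤ)):ℚ) • ev N 0 + ev N 1 + hv N := by rw [su, hsc]
  rw [he]
  exact dual_add (dual_add (dual_smul_int _ (lam_dual (ev_mem_small (k := 0) (by norm_num))))
    (lam_dual (ev_mem_small (k := 1) (by norm_num)))) (dual_hv hN)

lemma dual_suv (hN : 3 ≤ N) (hN8 : N % 8 = 6) : Dual N (suv N) := by
  obtain ⟨j, hj⟩ : ∃ j : ℕ, N = 8*j+6 := ⟨(N-6)/8, by omega⟩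
  have hsc : ((N:ℚ)+2)/8 = ((((j:ℤ)+1 : ℤ)):ℚ) := by rw [hj]; push_cast; ring
  have he : suv N = ((((j:ℤ)+1 : ℤ)):ℚ) • ev N 0 + ev N 1 + hv N + ev N (N+1) := by rw [suv, hsc]
  rw [he]
  exact dual_add (dual_add (dual_add (dual_smul_int _ (lam_dual (ev_mem_small (k := 0) (by norm_num))))
    (lam_dual (ev_mem_small (k := 1) (by norm_num)))) (dual_hv hN)) (dual_eL hN)

lemma two_su_mem (hN : 3 ≤ N) (hN8 : N % 8 = 6) : (2:ℚ) • su N ∈ LamSet N := by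
  obtain ⟨j, hj⟩ : ∃ j : ℕ, N = 8*j+6 := ⟨(N-6)/8, by omega⟩
  have hsc : ((N:ℚ)-6)/8 = (((j:ℤ)):ℚ) := by rw [hj]; push_cast; ring
  have he : (2:ℚ) • su N = (((2*(j:ℤ) : ℤ)):ℚ) • ev N 0 + ((2:ℤ):ℚ) • ev N 1 + (2:ℚ) • hv N := by
    funext i
    simp only [su, Pi.add_apply, Pi.smul_apply, smul_eq_mul, hsc]
    push_cast
    ring
  rw [he]
  exact lam_add (lam_add (lam_smul_int _ (ev_mem_small (k := 0) (by norm_num)))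
    (lam_smul_int _ (ev_mem_small (k := 1) (by norm_num)))) (two_hv_mem hN (by omega))

lemma two_suv_mem (hN : 3 ≤ N) (hN8 : N % 8 = 6) : (2:ℚ) • suv N ∈ LamSet N := by
  obtain ⟨j, hj⟩ : ∃ j : ℕ, N = 8*j+6 := ⟨(N-6)/8, by omega⟩
  have hsc : ((N:ℚ)+2)/8 = (((j:ℤ)+1):ℚ) := by rw [hj]; push_cast; ring
  have he : (2:ℚ) • suv N = (((2*(j:ℤ)+2 : ℤ)):ℚ) • ev N 0 + ((2:ℤ):ℚ) • ev N 1 + (2:ℚ) • hv N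
      + (2:ℚ) • ev N (N+1) := by
    funext i
    simp only [suv, Pi.add_apply, Pi.smul_apply, smul_eq_mul, hsc]
    push_cast
    ring
  rw [he]
  exact lam_add (lam_add (lam_add (lam_smul_int _ (ev_mem_small (k := 0) (by norm_num)))
    (lam_smul_int _ (ev_mem_small (k := 1) (by norm_num)))) (two_hv_mem hN (by omega)))
    (two_eL_mem hN)

lemma cong_su_hv (hN : 3 ≤ N) (hN8 : N % 8 = 6) : Cong N (su N) (hv N) := by
  obtain ⟨j, hj⟩ : ∃ j : ℕ, N = 8*j+6 := ⟨(N-6)/8, by omega⟩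
  unfold Cong
  have hsc : ((N:ℚ)-6)/8 = (((j:ℤ)):ℚ) := by rw [hj]; push_cast; ring
  have he : su N - hv N = ((j:ℤ):ℚ) • ev N 0 + ((1:ℤ):ℚ) • ev N 1 := by
    funext i
    simp only [su, Pi.add_apply, Pi.sub_apply, Pi.smul_apply, smul_eq_mul, hsc]
    push_cast
    ring
  rw [he]
  exact lam_add (lam_smul_int _ (ev_mem_small (k := 0) (by norm_num)))
    (lam_smul_int _ (ev_mem_small (k := 1) (by norm_num)))

lemma cong_suv_hveL (hN : 3 ≤ N) (hN8 : N % 8 = 6) :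
    Cong N (suv N) (hv N + ev N (N+1)) := by
  obtain ⟨j, hj⟩ : ∃ j : ℕ, N = 8*j+6 := ⟨(N-6)/8, by omega⟩
  unfold Cong
  have hsc : ((N:ℚ)+2)/8 = (((j:ℤ)+1):ℚ) := by rw [hj]; push_cast; ring
  have he : suv N - (hv N + ev N (N+1)) = ((((j:ℤ)+1 : ℤ)):ℚ) • ev N 0 + ((1:ℤ):ℚ) • ev N 1 := by
    funext i
    simp only [suv, Pi.add_apply, Pi.sub_apply, Pi.smul_apply, smul_eq_mul, hsc]
    push_cast
    ring
  rw [he]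
  exact lam_add (lam_smul_int _ (ev_mem_small (k := 0) (by norm_num)))
    (lam_smul_int _ (ev_mem_small (k := 1) (by norm_num)))

/-! parity-shift helpers -/

lemma pair_shift_odd {s x y : Fin (N+2) → ℚ} (hsd : Dual N s) (hc : Cong N x y) {m : ℤ}
    (h : 2 * LamForm N s y = 2*(m:ℚ)+1) :
    ∃ m' : ℤ, 2 * LamForm N s x = 2*(m':ℚ)+1 := by
  obtain ⟨k, hk⟩ := hsd (x - y) hc
  refine ⟨m + k, ?_⟩
  have hx : LamForm N s x = LamForm N s y + LamForm N s (x - y) := by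
    rw [form_sub_right]; ring
  rw [hx, hk]
  push_cast
  linarith [h]

lemma pair_shift_even {s x y : Fin (N+2) → ℚ} (hsd : Dual N s) (hc : Cong N x y) {m : ℤ}
    (h : 2 * LamForm N s y = 2*(m:ℚ)) :
    ∃ m' : ℤ, 2 * LamForm N s x = 2*(m':ℚ) := by
  obtain ⟨k, hk⟩ := hsd (x - y) hc
  refine ⟨m + k, ?_⟩
  have hx : LamForm N s x = LamForm N s y + LamForm N s (x - y) := by
    rw [form_sub_right]; ring
  rw [hx, hk]
  push_cast
  linarith [h]

lemma cong_addc {x c : Fin (N+2) → ℚ} (h : Cong N (x + c) x) : c ∈ LamSet N := by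
  unfold Cong at h
  have he : x + c - x = c := by funext i; simp
  rwa [he] at h

lemma triv_reps3 (hN : 3 ≤ N) {φ : (Fin (N+2) → ℚ) ≃ₗ[ℚ] (Fin (N+2) → ℚ)}
    (hφ : InOp N φ) (r0 t1 t2 : Fin (N+2) → ℚ)
    (hdec : ∀ x, Dual N x → Cong N x 0 ∨ Cong N x r0 ∨ Cong N x t1 ∨ Cong N x t2)
    (h0 : Cong N (φ r0) r0) (h1 : Cong N (φ t1) t1) (h2 : Cong N (φ t2) t2) :
    ∀ x, Dual N x → φ x - x ∈ LamSet N := by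
  intro x hx
  have key : ∀ r, Cong N x r → Cong N (φ r) r → φ x - x ∈ LamSet N := by
    intro r hr hφr
    have ha : x - r ∈ LamSet N := hr
    have hb : φ (x - r) ∈ LamSet N := (hφ.2.1 _).1 ha
    have h3 : φ x - x = (φ (x - r) - (x - r)) + (φ r - r) := by
      rw [map_sub]; funext i; simp; ring
    rw [h3]; exact lam_add (lam_sub hb ha) hφr
  rcases hdec x hx with h | h | h | h
  · refine key 0 h ?_
    rw [map_zero]; exact cong_refl 0
  · exact key _ h h0
  · exact key _ h h1
  · exact key _ h h2


variable {N : ℕ}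

lemma dual_small (hN : 3 ≤ N) {x : Fin (N+2) → ℚ} (hx : Dual N x) :
    ∀ i : Fin (N+2), (i:ℕ) < 4 → ZI (x i) := by
  intro i h
  have h4 : (i:ℕ) = 0 ∨ (i:ℕ) = 1 ∨ (i:ℕ) = 2 ∨ (i:ℕ) = 3 := by omega
  have hc := (dual_coords hN hx).1
  rcases h4 with h0 | h1 | h2 | h3
  · have : i = 0 := Fin.ext (by rw [val0]; exact h0)
    rw [this]; exact hc.1
  · have : i = 1 := Fin.ext (by rw [val1]; exact h1)
    rw [this]; exact hc.2.1
  · have : i = 2 := Fin.ext (by rw [val2 hN]; exact h2)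
    rw [this]; exact hc.2.2.1
  · have : i = 3 := Fin.ext (by rw [val3 hN]; exact h3)
    rw [this]; exact hc.2.2.2

lemma dual_two_coords (hN : 3 ≤ N) {x : Fin (N+2) → ℚ} (hx : Dual N x) :
    ∀ i, ZI (((2:ℚ) • x) i) := by
  intro i
  rcases lt_or_ge (i:ℕ) 4 with h | h
  · have := dual_small hN hx i h
    simpa using (ZI.intCast 2).mul this
  · have := (dual_coords hN hx).2.1 i h
    simpa using this

lemma deco_two (hN : 3 ≤ N) {x : Fin (N+2) → ℚ} (hx : Dual N x)
    (hodd : ∃ k : ℤ, LamForm N x x = 2*(k:ℚ)+1) : (2:ℚ) • x ∈ LamSet N := by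
  rw [mem_lam]
  refine ⟨dual_two_coords hN hx, ?_⟩
  rcases dual_cases hN hx with hi | hh
  · obtain ⟨a, b, hsd, _, _⟩ := q_int hN hx hi
    exact ⟨a, by rw [SD_smul, hsd]⟩
  · have hN8 := half_mod8 hN hx hh hodd
    obtain ⟨j, hj⟩ : ∃ j : ℕ, N = 8*j+6 := ⟨(N-6)/8, by omega⟩
    obtain ⟨a, b, hsd, _⟩ := q_half hN hx hh
    refine ⟨4*(j:ℤ)+2+a, ?_⟩
    rw [SD_smul, hsd, hj]
    push_cast; ring

lemma dual_two_mem_even (hN : 3 ≤ N) (hNe : N % 2 = 0) {x : Fin (N+2) → ℚ}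
    (hx : Dual N x) : (2:ℚ) • x ∈ LamSet N := by
  rw [mem_lam]
  refine ⟨dual_two_coords hN hx, ?_⟩
  rcases dual_cases hN hx with hi | hh
  · obtain ⟨a, b, hsd, _, _⟩ := q_int hN hx hi
    exact ⟨a, by rw [SD_smul, hsd]⟩
  · obtain ⟨k, hk⟩ : ∃ k : ℕ, N = 2*k := ⟨N/2, by omega⟩
    obtain ⟨a, b, hsd, _⟩ := q_half hN hx hh
    refine ⟨(k:ℤ)-1+a, ?_⟩
    rw [SD_smul, hsd, hk]
    push_cast; ring

lemma neg_op (hN : 3 ≤ N) :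
    InOp N (LinearEquiv.neg ℚ : (Fin (N+2) → ℚ) ≃ₗ[ℚ] (Fin (N+2) → ℚ)) := by
  refine ⟨?_, ?_, ?_⟩
  · intro x y
    simp only [LinearEquiv.neg_apply]
    rw [form_neg_left, form_neg_right]; ring
  · intro x
    simp only [LinearEquiv.neg_apply]
    constructor
    · exact lam_neg
    · intro hx
      have := lam_neg hx
      simpa using this
  · unfold posdet
    simp only [LinearEquiv.neg_apply, form_neg_left, form_pp hN, form_qq hN,
      form_pq hN, form_qp hN]
    norm_num

lemma four_hv_mem (hN : 3 ≤ N) : (4:ℚ) • hv N ∈ LamSet N := by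
  rw [mem_lam]
  constructor
  · intro i
    by_cases hi : 4 ≤ (i:ℕ)
    · refine ⟨2, ?_⟩
      simp [hv, hi]
      norm_num
    · refine ⟨0, ?_⟩
      simp [hv, hi]
  · refine ⟨(N:ℤ)-2, ?_⟩
    rw [SD_smul, SD_hv hN]
    push_cast; ring

lemma heL2 (hN : 3 ≤ N) (hNo : N % 2 = 1) :
    Cong N (ev N (N+1)) ((2:ℚ) • hv N) := by
  obtain ⟨k, hk⟩ : ∃ k : ℕ, N = 2*k+1 := ⟨(N-1)/2, by omega⟩
  unfold Cong
  rw [mem_lam]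
  constructor
  · intro i
    by_cases hi : 4 ≤ (i:ℕ)
    · have h1 : ZI (ev N (N+1) i) := ev_int _ i
      have h2 : ((2:ℚ) • hv N) i = 1 := by simp [hv, hi]; try norm_num
      have : (ev N (N+1) - (2:ℚ) • hv N) i = ev N (N+1) i - 1 := by
        simp only [Pi.sub_apply, h2]
      rw [this]
      exact h1.sub ZI.one
    · have h0 : (i:ℕ) ≠ N+1 := by omega
      have : (ev N (N+1) - (2:ℚ) • hv N) i = 0 := by
        simp [ev, hv, hi, h0]
      rw [this]; exact ZI.zero
  · refine ⟨1-(k:ℤ), ?_⟩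
    rw [SD_sub, SD_eL hN, SD_smul, SD_hv hN, hk]
    push_cast; ring

lemma xi_class (hN : 3 ≤ N) {x : Fin (N+2) → ℚ} (hx : Dual N x)
    (hodd : ∃ k : ℤ, LamForm N x x = 2*(k:ℚ)+1) :
    Cong N x (ev N (N+1)) ∨
      (N % 8 = 6 ∧ (Cong N x (hv N) ∨ Cong N x (hv N + ev N (N+1)))) := by
  obtain ⟨k, hk⟩ := hodd
  rcases dual_decomp hN hx with h0 | h1 | h2 | h3
  · exfalso
    rw [cong_zero_iff] at h0
    have hi : ITp N x := fun i _ => h0.1 i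
    obtain ⟨a, b, hsd, hq, hpar⟩ := q_int hN hx hi
    have hb : b = 2*k+1 := by
      have : (b:ℚ) = 2*(k:ℚ)+1 := by rw [← hq, hk]
      exact_mod_cast this
    obtain ⟨_, a', ha'⟩ := mem_lam.1 h0
    have haa : (a:ℚ) = 2*(a':ℚ) := by rw [← hsd, ha']
    have : a = 2*a' := by exact_mod_cast haa
    omega
  · exact Or.inl h1
  · have hh : HTp N x := by
      intro i hi
      have hl : x - hv N ∈ LamSet N := h2
      have h1 := (mem_lam.1 hl).1 i
      have he : (x - hv N) i = x i - 1/2 := by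
        simp [hv, hi]
      rwa [he] at h1
    exact Or.inr ⟨half_mod8 hN hx hh ⟨k, hk⟩, Or.inl h2⟩
  · have hh : HTp N x := by
      intro i hi
      have hl : x - (hv N + ev N (N+1)) ∈ LamSet N := h3
      have h1 := (mem_lam.1 hl).1 i
      have h2' : ZI (ev N (N+1) i) := ev_int _ i
      have he : (x - (hv N + ev N (N+1))) i = (x i - 1/2) - ev N (N+1) i := by
        simp [hv, hi]; ring
      rw [he] at h1
      have := h1.add h2'
      simpa using this
    exact Or.inr ⟨half_mod8 hN hx hh ⟨k, hk⟩, Or.inr h3⟩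

lemma odd_case (hN : 3 ≤ N) (hNo : N % 2 = 1)
    {h : (Fin (N+2) → ℚ) ≃ₗ[ℚ] (Fin (N+2) → ℚ)} (hop : InOp N h) :
    InTil N h ∨ InTil N (h.trans (LinearEquiv.neg ℚ).symm) := by
  have hd : Dual N (h (hv N)) := op_dual hop (dual_hv hN)
  have hQ : LamForm N (h (hv N)) (h (hv N)) = -(((N:ℚ)-2)/4) := by
    rw [hop.1]; exact hvhv hN
  have heL2' := heL2 hN hNo
  have hmapeL : ∀ (φ : (Fin (N+2) → ℚ) ≃ₗ[ℚ] (Fin (N+2) → ℚ)), φ ((2:ℚ) • hv N) = (2:ℚ) • φ (hv N) :=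
    fun φ => map_smul φ 2 (hv N)
  rcases dual_decomp hN hd with h0 | h1 | h2 | h3
  · exfalso
    rw [cong_zero_iff] at h0
    exact not_mem_hv hN (op_mem_rev hop h0)
  · exfalso
    have hi : ITp N (h (hv N)) := by
      intro i hi
      have hl : h (hv N) - ev N (N+1) ∈ LamSet N := h1
      have ha := (mem_lam.1 hl).1 i
      have hb : ZI (ev N (N+1) i) := ev_int _ i
      have := ha.add hb
      simpa using this
    obtain ⟨a, b, _, hq, _⟩ := q_int hN hd hi
    rw [hQ] at hq
    have h4 : (4*(b:ℚ)) = 2 - (N:ℚ) := by linarith [hq]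
    have h5 : (4*b : ℤ) = 2 - (N:ℤ) := by exact_mod_cast h4
    omega
  · -- h hv ≅ hv : trivial on discriminant
    left
    refine ⟨hop, ?_⟩
    have hceL : Cong N (h (ev N (N+1))) (ev N (N+1)) := by
      have c1 : Cong N (h (ev N (N+1))) (h ((2:ℚ) • hv N)) := op_cong hop heL2'
      rw [hmapeL h] at c1
      have c2 : Cong N (((2:ℤ):ℚ) • h (hv N)) (((2:ℤ):ℚ) • hv N) := cong_smul_int 2 h2
      have hcast : ((2:ℤ):ℚ) = (2:ℚ) := by norm_num
      rw [hcast] at c2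
      exact cong_trans (cong_trans c1 c2) (cong_symm heL2')
    exact triv_of_reps hN hop h2 hceL
  · -- h hv ≅ hv + eL : compose with -1
    right
    have hnegop : InOp N (LinearEquiv.neg ℚ : (Fin (N+2) → ℚ) ≃ₗ[ℚ] _) := neg_op hN
    have hφop : InOp N (h.trans (LinearEquiv.neg ℚ).symm) := op_trans_symm hN hnegop hop
    have hφap : ∀ y, (h.trans (LinearEquiv.neg ℚ).symm) y = -(h y) := by
      intro y
      rw [LinearEquiv.trans_apply, LinearEquiv.symm_apply_eq]
      simp
    refine ⟨hφop, ?_⟩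
    have k1 : Cong N ((h.trans (LinearEquiv.neg ℚ).symm) (hv N)) (hv N) := by
      rw [hφap]
      have c1 : Cong N (-(h (hv N))) (-(hv N + ev N (N+1))) := cong_neg h3
      refine cong_trans c1 ?_
      unfold Cong
      have he : -(hv N + ev N (N+1)) - hv N
          = (ev N (N+1) - (2:ℚ) • hv N) - (2:ℚ) • ev N (N+1) := by
        funext i; simp; ring
      rw [he]
      exact lam_sub heL2' (two_eL_mem hN)
    have k2 : Cong N ((h.trans (LinearEquiv.neg ℚ).symm) (ev N (N+1))) (ev N (N+1)) := by
      rw [hφap]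
      have c1 : Cong N (h (ev N (N+1))) ((2:ℚ) • h (hv N)) := by
        have := op_cong hop heL2'
        rwa [hmapeL h] at this
      have c2 : Cong N (((2:ℤ):ℚ) • h (hv N)) (((2:ℤ):ℚ) • (hv N + ev N (N+1))) :=
        cong_smul_int 2 h3
      have hcast : ((2:ℤ):ℚ) = (2:ℚ) := by norm_num
      rw [hcast] at c2
      have c3 : Cong N (h (ev N (N+1))) ((2:ℚ) • (hv N + ev N (N+1))) := cong_trans c1 c2
      have c4 : Cong N (-(h (ev N (N+1)))) (-((2:ℚ) • (hv N + ev N (N+1)))) := cong_neg c3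
      refine cong_trans c4 ?_
      unfold Cong
      have he : -((2:ℚ) • (hv N + ev N (N+1))) - ev N (N+1)
          = (ev N (N+1) - (2:ℚ) • hv N) - (2:ℚ) • ((2:ℚ) • ev N (N+1)) := by
        funext i; simp; ring
      rw [he]
      refine lam_sub heL2' ?_
      have h4 := lam_smul_int 2 (two_eL_mem hN)
      have : ((2:ℤ):ℚ) = (2:ℚ) := by norm_num
      rwa [this] at h4
    exact triv_of_reps hN hφop k1 k2


variable {N : ℕ}

lemma index2_even (hN : 3 ≤ N)
    (ξv : Fin (N+2) → ℚ)
    (s r0 t1 t2 : Fin (N+2) → ℚ)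
    (hs : LamForm N s s = -1) (hsd : Dual N s) (hr : (2:ℚ) • s ∈ LamSet N)
    (hsr : Cong N s r0) (hξr : Cong N ξv r0)
    (ht1d : Dual N t1)
    (hdec : ∀ x, Dual N x → Cong N x 0 ∨ Cong N x r0 ∨ Cong N x t1 ∨ Cong N x t2)
    (hn10 : ¬ Cong N t1 0) (hn1r : ¬ Cong N t1 r0) (hn12 : ¬ Cong N t1 t2)
    (hsum1 : Cong N (r0 + t1) t2) (hsum2 : Cong N (r0 + t2) t1)
    (hτr : Cong N (rfle N s hs r0) r0)
    (hτ1 : Cong N (rfle N s hs t1) t2) (hτ2 : Cong N (rfle N s hs t2) t1) :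
    InGam N ξv (rfle N s hs) ∧ ¬ InTil N (rfle N s hs) ∧
      ∀ h, InGam N ξv h → InTil N h ∨ InTil N (h.trans (rfle N s hs).symm) := by
  have τop := rfle_op hN s hs hsd hr
  have hξs : Cong N ξv s := cong_trans hξr (cong_symm hsr)
  refine ⟨⟨τop, ?_⟩, ?_, ?_⟩
  · have hss : 2 * LamForm N s s = 2*((-1:ℤ):ℚ) := by rw [hs]; norm_num
    obtain ⟨m, hm⟩ := pair_shift_even hsd hξs hss
    exact rfle_cong_even s hs hr ξv m hm
  · intro hT
    have hcc : Cong N (rfle N s hs t1) t1 := hT.2 t1 ht1d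
    exact hn12 (cong_trans (cong_symm hcc) hτ1)
  · intro h hg
    obtain ⟨hop, hgξ⟩ := hg
    have hgξc : Cong N (h ξv) ξv := hgξ
    have hhr0 : Cong N (h r0) r0 :=
      cong_trans (op_cong hop (cong_symm hξr)) (cong_trans hgξc hξr)
    rcases hdec (h t1) (op_dual hop ht1d) with hc | hc | hc | hc
    · exfalso
      apply hn10
      rw [cong_zero_iff] at hc ⊢
      exact op_mem_rev hop hc
    · exfalso
      exact hn1r (op_cong_rev hop (cong_trans hc (cong_symm hhr0)))
    · left
      refine ⟨hop, ?_⟩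
      have hht2 : Cong N (h t2) t2 := by
        have e1 : Cong N (h (r0 + t1)) (r0 + t1) := by
          rw [map_add]; exact cong_add hhr0 hc
        have e2 : Cong N (h t2) (h (r0 + t1)) := op_cong hop (cong_symm hsum1)
        exact cong_trans (cong_trans e2 e1) hsum1
      exact triv_reps3 hN hop r0 t1 t2 hdec hhr0 hc hht2
    · right
      have hφop : InOp N (h.trans (rfle N s hs).symm) := op_trans_symm hN τop hop
      have hφap : ∀ y, (h.trans (rfle N s hs).symm) y = rfle N s hs (h y) := by
        intro y
        rw [LinearEquiv.trans_apply]
        rfl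
      refine ⟨hφop, ?_⟩
      have k0 : Cong N ((h.trans (rfle N s hs).symm) r0) r0 := by
        rw [hφap]
        exact cong_trans (op_cong τop hhr0) hτr
      have k1 : Cong N ((h.trans (rfle N s hs).symm) t1) t1 := by
        rw [hφap]
        exact cong_trans (op_cong τop hc) hτ2
      have k2 : Cong N ((h.trans (rfle N s hs).symm) t2) t2 := by
        rw [hφap]
        have hht2 : Cong N (h t2) t1 := by
          have e1 : Cong N (h (r0 + t1)) (r0 + t2) := by
            rw [map_add]; exact cong_add hhr0 hc
          have e2 : Cong N (h t2) (h (r0 + t1)) := op_cong hop (cong_symm hsum1)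
          exact cong_trans (cong_trans e2 e1) hsum2
        exact cong_trans (op_cong τop hht2) hτ1
      exact triv_reps3 hN hφop r0 t1 t2 hdec k0 k1 k2

lemma index3 (hN : 3 ≤ N)
    (ξv : Fin (N+2) → ℚ) (hξd : Dual N ξv)
    (s1 s2 r0 t1 t2 : Fin (N+2) → ℚ)
    (hs1 : LamForm N s1 s1 = -1) (hs2 : LamForm N s2 s2 = -1)
    (hsd1 : Dual N s1) (hsd2 : Dual N s2)
    (hr1 : (2:ℚ) • s1 ∈ LamSet N) (hr2 : (2:ℚ) • s2 ∈ LamSet N)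
    (hs1t : Cong N s1 t1) (hs2t : Cong N s2 t2) (hξr : Cong N ξv r0)
    (ht1d : Dual N t1) (ht2d : Dual N t2)
    (hdec : ∀ x, Dual N x → Cong N x 0 ∨ Cong N x r0 ∨ Cong N x t1 ∨ Cong N x t2)
    (hnr0 : ¬ Cong N r0 0) (hnt10 : ¬ Cong N t1 0) (hnt20 : ¬ Cong N t2 0)
    (hsum12 : Cong N (t1 + t2) r0)
    (ho1r : ∃ m:ℤ, 2 * LamForm N s1 r0 = 2*(m:ℚ)+1)
    (ho2r : ∃ m:ℤ, 2 * LamForm N s2 r0 = 2*(m:ℚ)+1)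
    (ho12 : ∃ m:ℤ, 2 * LamForm N s2 s1 = 2*(m:ℚ)+1)
    (ho21 : ∃ m:ℤ, 2 * LamForm N s1 s2 = 2*(m:ℚ)+1) :
    InOp N (rfle N s1 hs1) ∧ InOp N (rfle N s2 hs2) ∧
    ¬ InGam N ξv (rfle N s1 hs1) ∧ ¬ InGam N ξv (rfle N s2 hs2) ∧
    ¬ InGam N ξv ((rfle N s1 hs1).trans (rfle N s2 hs2).symm) ∧
    ∀ h, InOp N h → InGam N ξv h ∨ InGam N ξv (h.trans (rfle N s1 hs1).symm) ∨
      InGam N ξv (h.trans (rfle N s2 hs2).symm) := by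
  have g1op := rfle_op hN s1 hs1 hsd1 hr1
  have g2op := rfle_op hN s2 hs2 hsd2 hr2
  -- moving ξ
  obtain ⟨m1, hm1⟩ := pair_shift_odd hsd1 hξr (Classical.choose_spec ho1r)
  obtain ⟨m2, hm2⟩ := pair_shift_odd hsd2 hξr (Classical.choose_spec ho2r)
  have hg1ξ : Cong N (rfle N s1 hs1 ξv) (ξv + s1) := rfle_cong_odd s1 hs1 hr1 ξv m1 hm1
  have hg2ξ : Cong N (rfle N s2 hs2 ξv) (ξv + s2) := rfle_cong_odd s2 hs2 hr2 ξv m2 hm2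
  -- if ξ + s1 ≅ ξ then t1 ∈ Λ : contradiction
  have habs1 : ¬ Cong N (ξv + s1) ξv := by
    intro hcc
    have hs1mem : s1 ∈ LamSet N := cong_addc hcc
    apply hnt10
    rw [cong_zero_iff]
    have := lam_sub hs1mem hs1t
    simpa using this
  have habs2 : ¬ Cong N (ξv + s2) ξv := by
    intro hcc
    have hs2mem : s2 ∈ LamSet N := cong_addc hcc
    apply hnt20
    rw [cong_zero_iff]
    have := lam_sub hs2mem hs2t
    simpa using this
  refine ⟨g1op, g2op, ?_, ?_, ?_, ?_⟩
  · intro hg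
    exact habs1 (cong_trans (cong_symm hg1ξ) hg.2)
  · intro hg
    exact habs2 (cong_trans (cong_symm hg2ξ) hg.2)
  · intro hg
    have hap : ((rfle N s1 hs1).trans (rfle N s2 hs2).symm) ξv
        = rfle N s2 hs2 (rfle N s1 hs1 ξv) := by
      rw [LinearEquiv.trans_apply]; rfl
    have hcξ : Cong N (((rfle N s1 hs1).trans (rfle N s2 hs2).symm) ξv) ξv := hg.2
    rw [hap] at hcξ
    -- g₂ (g₁ ξ) ≅ ξ + s1
    have c1 : Cong N (rfle N s2 hs2 (rfle N s1 hs1 ξv)) (rfle N s2 hs2 (ξv + s1)) :=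
      op_cong g2op hg1ξ
    have c2 : Cong N (rfle N s2 hs2 (ξv + s1)) ((ξv + s2) + (s1 + s2)) := by
      have ha : rfle N s2 hs2 (ξv + s1) = rfle N s2 hs2 ξv + rfle N s2 hs2 s1 := map_add _ _ _
      rw [ha]
      refine cong_add hg2ξ ?_
      exact rfle_cong_odd s2 hs2 hr2 s1 (Classical.choose ho12) (Classical.choose_spec ho12)
    have c3 : Cong N ((ξv + s2) + (s1 + s2)) (ξv + s1) := by
      unfold Cong
      have he : (ξv + s2) + (s1 + s2) - (ξv + s1) = (2:ℚ) • s2 := by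
        funext i; simp; ring
      rw [he]; exact hr2
    have := cong_trans (cong_symm (cong_trans (cong_trans c1 c2) c3)) hcξ
    exact habs1 this
  · intro h hop
    rcases hdec (h ξv) (op_dual hop hξd) with hc | hc | hc | hc
    · exfalso
      apply hnr0
      rw [cong_zero_iff] at hc
      have hmem : ξv ∈ LamSet N := op_mem_rev hop hc
      rw [cong_zero_iff]
      have := lam_sub hmem hξr
      simpa using this
    · left
      exact ⟨hop, cong_trans hc (cong_symm hξr)⟩
    · -- h ξ ≅ t1 : compose with g₂
      right; right
      have hφop : InOp N (h.trans (rfle N s2 hs2).symm) := op_trans_symm hN g2op hop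
      refine ⟨hφop, ?_⟩
      have hap : (h.trans (rfle N s2 hs2).symm) ξv = rfle N s2 hs2 (h ξv) := by
        rw [LinearEquiv.trans_apply]; rfl
      show (h.trans (rfle N s2 hs2).symm) ξv - ξv ∈ LamSet N
      rw [hap]
      have c0 : Cong N (h ξv) s1 := cong_trans hc (cong_symm hs1t)
      have c1 : Cong N (rfle N s2 hs2 (h ξv)) (rfle N s2 hs2 s1) := op_cong g2op c0
      have c2 : Cong N (rfle N s2 hs2 s1) (s1 + s2) :=
        rfle_cong_odd s2 hs2 hr2 s1 (Classical.choose ho12) (Classical.choose_spec ho12)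
      have c3 : Cong N (s1 + s2) (t1 + t2) := cong_add hs1t hs2t
      have c4 : Cong N (t1 + t2) ξv := cong_trans hsum12 (cong_symm hξr)
      exact cong_trans (cong_trans (cong_trans c1 c2) c3) c4
    · -- h ξ ≅ t2 : compose with g₁
      right; left
      have hφop : InOp N (h.trans (rfle N s1 hs1).symm) := op_trans_symm hN g1op hop
      refine ⟨hφop, ?_⟩
      have hap : (h.trans (rfle N s1 hs1).symm) ξv = rfle N s1 hs1 (h ξv) := by
        rw [LinearEquiv.trans_apply]; rfl
      show (h.trans (rfle N s1 hs1).symm) ξv - ξv ∈ LamSet N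
      rw [hap]
      have c0 : Cong N (h ξv) s2 := cong_trans hc (cong_symm hs2t)
      have c1 : Cong N (rfle N s1 hs1 (h ξv)) (rfle N s1 hs1 s2) := op_cong g1op c0
      have c2 : Cong N (rfle N s1 hs1 s2) (s2 + s1) :=
        rfle_cong_odd s1 hs1 hr1 s2 (Classical.choose ho21) (Classical.choose_spec ho21)
      have c3 : Cong N (s2 + s1) (t1 + t2) := by
        have h1 := cong_add hs2t hs1t
        have h2 : Cong N (t2 + t1) (t1 + t2) := by
          unfold Cong
          have he : t2 + t1 - (t1 + t2) = 0 := by funext i; simp; ring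
          rw [he]; exact lam_zero
        exact cong_trans h1 h2
      have c4 : Cong N (t1 + t2) ξv := cong_trans hsum12 (cong_symm hξr)
      exact cong_trans (cong_trans (cong_trans c1 c2) c3) c4


variable {N : ℕ}

/-! sum-relation congruences (N even where needed) -/

lemma S_sum1 (hN : 3 ≤ N) (hNe : N % 2 = 0) :
    Cong N (hv N + (hv N + ev N (N+1))) (ev N (N+1)) := by
  unfold Cong
  have he : hv N + (hv N + ev N (N+1)) - ev N (N+1) = (2:ℚ) • hv N := by
    funext i; simp; ring
  rw [he]; exact two_hv_mem hN hNe

lemma S_sum2 (hN : 3 ≤ N) :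
    Cong N (ev N (N+1) + (hv N + ev N (N+1))) (hv N) := by
  unfold Cong
  have he : ev N (N+1) + (hv N + ev N (N+1)) - hv N = (2:ℚ) • ev N (N+1) := by
    funext i; simp; ring
  rw [he]; exact two_eL_mem hN

lemma S_sum3 (hN : 3 ≤ N) : Cong N (ev N (N+1) + hv N) (hv N + ev N (N+1)) := by
  unfold Cong
  have he : ev N (N+1) + hv N - (hv N + ev N (N+1)) = 0 := by funext i; simp; ring
  rw [he]; exact lam_zero

lemma S_sum4 (hN : 3 ≤ N) (hNe : N % 2 = 0) :
    Cong N ((hv N + ev N (N+1)) + hv N) (ev N (N+1)) := by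
  unfold Cong
  have he : (hv N + ev N (N+1)) + hv N - ev N (N+1) = (2:ℚ) • hv N := by
    funext i; simp; ring
  rw [he]; exact two_hv_mem hN hNe

lemma S_sum5 (hN : 3 ≤ N) :
    Cong N ((hv N + ev N (N+1)) + ev N (N+1)) (hv N) := by
  unfold Cong
  have he : (hv N + ev N (N+1)) + ev N (N+1) - hv N = (2:ℚ) • ev N (N+1) := by
    funext i; simp; ring
  rw [he]; exact two_eL_mem hN

/-! reflection action, case r0 = eL -/

lemma A_tau_r (hN : 3 ≤ N) :
    Cong N (rfle N (ev N (N+1)) (eLeL hN) (ev N (N+1))) (ev N (N+1)) := by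
  refine rfle_cong_even _ _ (two_eL_mem hN) _ (-1) ?_
  rw [eLeL hN]; norm_num

lemma A_tau_1 (hN : 3 ≤ N) :
    Cong N (rfle N (ev N (N+1)) (eLeL hN) (hv N)) (hv N + ev N (N+1)) := by
  refine rfle_cong_odd _ _ (two_eL_mem hN) _ (-1) ?_
  rw [eLhv hN]; norm_num

lemma A_tau_2 (hN : 3 ≤ N) :
    Cong N (rfle N (ev N (N+1)) (eLeL hN) (hv N + ev N (N+1))) (hv N) := by
  have h1 : Cong N (rfle N (ev N (N+1)) (eLeL hN) (hv N + ev N (N+1)))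
      ((hv N + ev N (N+1)) + ev N (N+1)) := by
    refine rfle_cong_odd _ _ (two_eL_mem hN) _ (-2) ?_
    rw [form_add_right, eLhv hN, eLeL hN]; norm_num
  exact cong_trans h1 (S_sum5 hN)

/-! reflection action, case r0 = hv, s = su -/

lemma B_tau_r (hN : 3 ≤ N) (hN8 : N % 8 = 6) :
    Cong N (rfle N (su N) (norm_su hN) (hv N)) (hv N) := by
  obtain ⟨j, hj⟩ : ∃ j : ℕ, N = 8*j+6 := ⟨(N-6)/8, by omega⟩
  refine rfle_cong_even _ _ (two_su_mem hN hN8) _ (-(2*(j:ℤ)+1)) ?_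
  rw [su_hv hN, hj]; push_cast; ring

lemma B_tau_1 (hN : 3 ≤ N) (hN8 : N % 8 = 6) :
    Cong N (rfle N (su N) (norm_su hN) (ev N (N+1))) (hv N + ev N (N+1)) := by
  have h1 : Cong N (rfle N (su N) (norm_su hN) (ev N (N+1))) (ev N (N+1) + su N) := by
    refine rfle_cong_odd _ _ (two_su_mem hN hN8) _ (-1) ?_
    rw [su_eL hN]; norm_num
  refine cong_trans h1 ?_
  unfold Cong
  have he : ev N (N+1) + su N - (hv N + ev N (N+1)) = su N - hv N := by
    funext i; simp; ring
  rw [he]; exact cong_su_hv hN hN8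

lemma B_tau_2 (hN : 3 ≤ N) (hN8 : N % 8 = 6) :
    Cong N (rfle N (su N) (norm_su hN) (hv N + ev N (N+1))) (ev N (N+1)) := by
  obtain ⟨j, hj⟩ : ∃ j : ℕ, N = 8*j+6 := ⟨(N-6)/8, by omega⟩
  have h1 : Cong N (rfle N (su N) (norm_su hN) (hv N + ev N (N+1)))
      ((hv N + ev N (N+1)) + su N) := by
    refine rfle_cong_odd _ _ (two_su_mem hN hN8) _ (-(2*(j:ℤ)+2)) ?_
    rw [form_add_right, su_hv hN, su_eL hN, hj]; push_cast; ring
  refine cong_trans h1 ?_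
  unfold Cong
  have he : (hv N + ev N (N+1)) + su N - ev N (N+1) = (su N - hv N) + (2:ℚ) • hv N := by
    funext i; simp; ring
  rw [he]
  exact lam_add (cong_su_hv hN hN8) (two_hv_mem hN (by omega))

/-! reflection action, case r0 = hv+eL, s = suv -/

lemma C_tau_r (hN : 3 ≤ N) (hN8 : N % 8 = 6) :
    Cong N (rfle N (suv N) (norm_suv hN) (hv N + ev N (N+1))) (hv N + ev N (N+1)) := by
  obtain ⟨j, hj⟩ : ∃ j : ℕ, N = 8*j+6 := ⟨(N-6)/8, by omega⟩
  refine rfle_cong_even _ _ (two_suv_mem hN hN8) _ (-(2*(j:ℤ)+3)) ?_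
  rw [form_add_right, suv_hv hN, suv_eL hN, hj]; push_cast; ring

lemma C_tau_1 (hN : 3 ≤ N) (hN8 : N % 8 = 6) :
    Cong N (rfle N (suv N) (norm_suv hN) (hv N)) (ev N (N+1)) := by
  obtain ⟨j, hj⟩ : ∃ j : ℕ, N = 8*j+6 := ⟨(N-6)/8, by omega⟩
  have h1 : Cong N (rfle N (suv N) (norm_suv hN) (hv N)) (hv N + suv N) := by
    refine rfle_cong_odd _ _ (two_suv_mem hN hN8) _ (-(2*(j:ℤ)+2)) ?_
    rw [suv_hv hN, hj]; push_cast; ring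
  refine cong_trans h1 ?_
  unfold Cong
  have he : hv N + suv N - ev N (N+1)
      = (suv N - (hv N + ev N (N+1))) + (2:ℚ) • hv N := by
    funext i; simp; ring
  rw [he]
  exact lam_add (cong_suv_hveL hN hN8) (two_hv_mem hN (by omega))

lemma C_tau_2 (hN : 3 ≤ N) (hN8 : N % 8 = 6) :
    Cong N (rfle N (suv N) (norm_suv hN) (ev N (N+1))) (hv N) := by
  have h1 : Cong N (rfle N (suv N) (norm_suv hN) (ev N (N+1))) (ev N (N+1) + suv N) := by
    refine rfle_cong_odd _ _ (two_suv_mem hN hN8) _ (-2) ?_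
    rw [suv_eL hN]; norm_num
  refine cong_trans h1 ?_
  unfold Cong
  have he : ev N (N+1) + suv N - hv N
      = (suv N - (hv N + ev N (N+1))) + (2:ℚ) • ev N (N+1) := by
    funext i; simp; ring
  rw [he]
  exact lam_add (cong_suv_hveL hN hN8) (two_eL_mem hN)

end S14
open S14 in
/-- For a decorated `D`-lattice `(Λ_N, ξ)`: `Õ⁺(Λ) ⊆ Γ_ξ ⊆ O⁺(Λ)`, the subgroup
`Õ⁺(Λ)` has index `2` in `Γ_ξ`, one has `Γ_ξ = O⁺(Λ)` unless `N ≡ 6 (mod 8)`, in which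
case `Γ_ξ` has index `3` in `O⁺(Λ)`; moreover `-id ∈ Γ_ξ` always, while `-id ∈ Õ(Λ)`
if and only if `N` is even. -/
theorem statement14 (N : ℕ) (hN : 3 ≤ N)
    (ξv : Fin (N + 2) → ℚ) (hξ : IsDeco N ξv) :
    (∀ g, InTil N g → InGam N ξv g) ∧
    (∀ g, InGam N ξv g → InOp N g) ∧
    (∃ g, InGam N ξv g ∧ ¬ InTil N g ∧
      ∀ h, InGam N ξv h → InTil N h ∨ InTil N (h.trans g.symm)) ∧
    (N % 8 ≠ 6 → ∀ g, InGam N ξv g ↔ InOp N g) ∧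
    (N % 8 = 6 → ∃ g₁ g₂, InOp N g₁ ∧ InOp N g₂ ∧
      ¬ InGam N ξv g₁ ∧ ¬ InGam N ξv g₂ ∧ ¬ InGam N ξv (g₁.trans g₂.symm) ∧
      ∀ h, InOp N h → InGam N ξv h ∨ InGam N ξv (h.trans g₁.symm) ∨
        InGam N ξv (h.trans g₂.symm)) ∧
    InGam N ξv (LinearEquiv.neg ℚ) ∧
    ((∀ x : Fin (N + 2) → ℚ,
        (∀ y ∈ LamSet N, ∃ a : ℤ, LamForm N x y = (a : ℚ)) →
        (-x) - x ∈ LamSet N) ↔ Even N) := by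
  have hξd : Dual N ξv := hξ.1
  obtain ⟨kξ, hkξ⟩ := hξ.2
  have hodd : ∃ k : ℤ, LamForm N ξv ξv = 2*(k:ℚ)+1 := ⟨kξ, by rw [hkξ]; ring⟩
  have hnegop : InOp N (LinearEquiv.neg ℚ : (Fin (N+2) → ℚ) ≃ₗ[ℚ] _) := neg_op hN
  have hneggam : InGam N ξv (LinearEquiv.neg ℚ) := by
    refine ⟨hnegop, ?_⟩
    have h2 := deco_two hN hξd hodd
    have he : (LinearEquiv.neg ℚ : (Fin (N+2) → ℚ) ≃ₗ[ℚ] _) ξv - ξv = -((2:ℚ) • ξv) := by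
      funext i; simp; try ring
    rw [he]
    exact lam_neg h2
  refine ⟨?_, ?_, ?_, ?_, ?_, hneggam, ?_⟩
  · intro g hg
    exact ⟨hg.1, hg.2 ξv hξd⟩
  · intro g hg
    exact hg.1
  · -- index 2
    by_cases hNo : N % 2 = 1
    · refine ⟨LinearEquiv.neg ℚ, hneggam, ?_, ?_⟩
      · intro hT
        have h1 := hT.2 (hv N) (dual_hv hN)
        have he : (LinearEquiv.neg ℚ : (Fin (N+2) → ℚ) ≃ₗ[ℚ] _) (hv N) - hv N
            = -((2:ℚ) • hv N) := by funext i; simp; try ring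
        rw [he] at h1
        have h2 := lam_neg h1
        simp only [neg_neg] at h2
        rw [mem_lam] at h2
        obtain ⟨_, a, ha⟩ := h2
        rw [SD_smul, SD_hv hN] at ha
        have h4 : (N:ℚ) - 2 = 2*(a:ℚ) := by linarith
        have h5 : (N:ℤ) - 2 = 2*a := by exact_mod_cast h4
        omega
      · intro h hg
        exact odd_case hN hNo hg.1
    · have hNe : N % 2 = 0 := by omega
      rcases xi_class hN hξd hodd with hc | ⟨hN8, hc2⟩
      · obtain ⟨a, b, c⟩ := index2_even hN ξv (ev N (N+1)) (ev N (N+1)) (hv N)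
          (hv N + ev N (N+1)) (eLeL hN) (dual_eL hN) (two_eL_mem hN) (cong_refl _) hc
          (dual_hv hN) (fun x hx => dual_decomp hN hx)
          (ncong_hv_zero hN) (ncong_hv_eL hN) (ncong_hv_hveL hN)
          (S_sum3 hN) (S_sum2 hN) (A_tau_r hN) (A_tau_1 hN) (A_tau_2 hN)
        exact ⟨_, a, b, c⟩
      · rcases hc2 with hc | hc
        · have hdec : ∀ x, Dual N x → Cong N x 0 ∨ Cong N x (hv N) ∨ Cong N x (ev N (N+1))
              ∨ Cong N x (hv N + ev N (N+1)) := by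
            intro x hx
            rcases dual_decomp hN hx with p | p | p | p
            exacts [Or.inl p, Or.inr (Or.inr (Or.inl p)), Or.inr (Or.inl p),
              Or.inr (Or.inr (Or.inr p))]
          obtain ⟨a, b, c⟩ := index2_even hN ξv (su N) (hv N) (ev N (N+1))
            (hv N + ev N (N+1)) (norm_su hN) (dual_su hN hN8) (two_su_mem hN hN8)
            (cong_su_hv hN hN8) hc (dual_eL hN) hdec
            (ncong_eL_zero hN) (fun hcc => ncong_hv_eL hN (cong_symm hcc)) (ncong_eL_hveL hN)
            (cong_refl _) (S_sum1 hN hNe)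
            (B_tau_r hN hN8) (B_tau_1 hN hN8) (B_tau_2 hN hN8)
          exact ⟨_, a, b, c⟩
        · have hdec : ∀ x, Dual N x → Cong N x 0 ∨ Cong N x (hv N + ev N (N+1))
              ∨ Cong N x (hv N) ∨ Cong N x (ev N (N+1)) := by
            intro x hx
            rcases dual_decomp hN hx with p | p | p | p
            exacts [Or.inl p, Or.inr (Or.inr (Or.inr p)), Or.inr (Or.inr (Or.inl p)),
              Or.inr (Or.inl p)]
          obtain ⟨a, b, c⟩ := index2_even hN ξv (suv N) (hv N + ev N (N+1)) (hv N)
            (ev N (N+1)) (norm_suv hN) (dual_suv hN hN8) (two_suv_mem hN hN8)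
            (cong_suv_hveL hN hN8) hc (dual_hv hN) hdec
            (ncong_hv_zero hN) (ncong_hv_hveL hN) (ncong_hv_eL hN)
            (S_sum4 hN hNe) (S_sum5 hN)
            (C_tau_r hN hN8) (C_tau_1 hN hN8) (C_tau_2 hN hN8)
          exact ⟨_, a, b, c⟩
  · -- no index 3 unless N ≡ 6 mod 8
    intro h8 g
    constructor
    · exact fun hg => hg.1
    · intro hop
      refine ⟨hop, ?_⟩
      have hgd : Dual N (g ξv) := op_dual hop hξd
      have hgodd : ∃ k:ℤ, LamForm N (g ξv) (g ξv) = 2*(k:ℚ)+1 := by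
        rw [hop.1]; exact hodd
      obtain ⟨hi1, a1, ha1⟩ := odd_norm_int hN hgd h8 hgodd
      obtain ⟨hi2, a2, ha2⟩ := odd_norm_int hN hξd h8 hodd
      rw [mem_lam]
      constructor
      · intro i
        rcases lt_or_ge (i:ℕ) 4 with h | h
        · have := (dual_small hN hgd i h).sub (dual_small hN hξd i h)
          simpa using this
        · have := (hi1 i h).sub (hi2 i h)
          simpa using this
      · refine ⟨a1 - a2, ?_⟩
        rw [SD_sub, ha1, ha2]; push_cast; ring
  · -- index 3
    intro hN8
    have hNe : N % 2 = 0 := by omega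
    obtain ⟨j, hj⟩ : ∃ j : ℕ, N = 8*j+6 := ⟨(N-6)/8, by omega⟩
    rcases xi_class hN hξd hodd with hc | ⟨_, hc2⟩
    · obtain ⟨o1, o2, o3, o4, o5, o6⟩ := index3 hN ξv hξd (su N) (suv N)
        (ev N (N+1)) (hv N) (hv N + ev N (N+1))
        (norm_su hN) (norm_suv hN) (dual_su hN hN8) (dual_suv hN hN8)
        (two_su_mem hN hN8) (two_suv_mem hN hN8)
        (cong_su_hv hN hN8) (cong_suv_hveL hN hN8) hc
        (dual_hv hN) (dual_add (dual_hv hN) (dual_eL hN))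
        (fun x hx => dual_decomp hN hx)
        (ncong_eL_zero hN) (ncong_hv_zero hN) (ncong_hveL_zero hN)
        (S_sum1 hN hNe)
        ⟨-1, by rw [su_eL hN]; norm_num⟩
        ⟨-2, by rw [suv_eL hN]; norm_num⟩
        ⟨-1, by rw [suv_su hN]; norm_num⟩
        ⟨-1, by rw [su_suv hN]; norm_num⟩
      exact ⟨_, _, o1, o2, o3, o4, o5, o6⟩
    · rcases hc2 with hc | hc
      · have hdec : ∀ x, Dual N x → Cong N x 0 ∨ Cong N x (hv N) ∨ Cong N x (ev N (N+1))
            ∨ Cong N x (hv N + ev N (N+1)) := by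
          intro x hx
          rcases dual_decomp hN hx with p | p | p | p
          exacts [Or.inl p, Or.inr (Or.inr (Or.inl p)), Or.inr (Or.inl p),
            Or.inr (Or.inr (Or.inr p))]
        obtain ⟨o1, o2, o3, o4, o5, o6⟩ := index3 hN ξv hξd (ev N (N+1)) (suv N)
          (hv N) (ev N (N+1)) (hv N + ev N (N+1))
          (eLeL hN) (norm_suv hN) (dual_eL hN) (dual_suv hN hN8)
          (two_eL_mem hN) (two_suv_mem hN hN8)
          (cong_refl _) (cong_suv_hveL hN hN8) hc
          (dual_eL hN) (dual_add (dual_hv hN) (dual_eL hN)) hdec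
          (ncong_hv_zero hN) (ncong_eL_zero hN) (ncong_hveL_zero hN)
          (S_sum2 hN)
          ⟨-1, by rw [eLhv hN]; norm_num⟩
          ⟨-(2*(j:ℤ)+2), by rw [suv_hv hN, hj]; push_cast; ring⟩
          ⟨-2, by rw [suv_eL hN]; norm_num⟩
          ⟨-2, by rw [form_comm, suv_eL hN]; norm_num⟩
        exact ⟨_, _, o1, o2, o3, o4, o5, o6⟩
      · have hdec : ∀ x, Dual N x → Cong N x 0 ∨ Cong N x (hv N + ev N (N+1))
            ∨ Cong N x (hv N) ∨ Cong N x (ev N (N+1)) := by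
          intro x hx
          rcases dual_decomp hN hx with p | p | p | p
          exacts [Or.inl p, Or.inr (Or.inr (Or.inr p)), Or.inr (Or.inr (Or.inl p)),
            Or.inr (Or.inl p)]
        obtain ⟨o1, o2, o3, o4, o5, o6⟩ := index3 hN ξv hξd (su N) (ev N (N+1))
          (hv N + ev N (N+1)) (hv N) (ev N (N+1))
          (norm_su hN) (eLeL hN) (dual_su hN hN8) (dual_eL hN)
          (two_su_mem hN hN8) (two_eL_mem hN)
          (cong_su_hv hN hN8) (cong_refl _) hc
          (dual_hv hN) (dual_eL hN) hdec
          (ncong_hveL_zero hN) (ncong_hv_zero hN) (ncong_eL_zero hN)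
          (cong_refl _)
          ⟨-(2*(j:ℤ)+2), by rw [form_add_right, su_hv hN, su_eL hN, hj]; push_cast; ring⟩
          ⟨-2, by rw [form_add_right, eLhv hN, eLeL hN]; norm_num⟩
          ⟨-1, by rw [form_comm, su_eL hN]; norm_num⟩
          ⟨-1, by rw [su_eL hN]; norm_num⟩
        exact ⟨_, _, o1, o2, o3, o4, o5, o6⟩
  · -- -1 in tilde iff N even
    constructor
    · intro hall
      by_contra hodd'
      have hNo : N % 2 = 1 := by
        rw [Nat.even_iff] at hodd'
        omega
      have h1 := hall (hv N) (dual_hv hN)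
      have he : -(hv N) - hv N = -((2:ℚ) • hv N) := by funext i; simp; try ring
      rw [he] at h1
      have h2 := lam_neg h1
      simp only [neg_neg] at h2
      rw [mem_lam] at h2
      obtain ⟨_, a, ha⟩ := h2
      rw [SD_smul, SD_hv hN] at ha
      have h4 : (N:ℚ) - 2 = 2*(a:ℚ) := by linarith
      have h5 : (N:ℤ) - 2 = 2*a := by exact_mod_cast h4
      omega
    · intro hEv x hx
      have hNe : N % 2 = 0 := Nat.even_iff.mp hEv
      have h2 := dual_two_mem_even hN hNe (show Dual N x from hx)
      have he : -x - x = -((2:ℚ) • x) := by funext i; simp; try ring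
      rw [he]
      exact lam_neg h2
end
end

section
/- Let Λ be a D-lattice of dimension N ≡ 5 (mod 8) and let v₁, v₂ ∈ Λ be unigonal vectors (each of square -12 and divisibility 4) with [v₁/4] = [v₂/4] in A_Λ, linearly independent, spanning a negative definite sublattice. Then (v₁, v₂) = 4, the vector u := (v₁ - v₂)/4 lies in Λ with u² = -2, and w := (v₁+v₂)/2 ∈ Λ is a hyperelliptic vector (w² = -4, div(w) = 2, q(w*) ≡ 1 mod 2ℤ). -/
noncomputable section

open scoped BigOperators

-- ===== auxiliary lemmas =====

lemma lamForm_comm (N : ℕ) (x y : Fin (N+2) → ℚ) : LamForm N x y = LamForm N y x := by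
  unfold LamForm
  rw [show (∑ i : Fin (N+2), if 4 ≤ (i:ℕ) then x i * y i else 0)
      = ∑ i : Fin (N+2), if 4 ≤ (i:ℕ) then y i * x i else 0 from
    Finset.sum_congr rfl (fun i _ => by split_ifs <;> ring)]
  ring

lemma lamForm_add_left (N : ℕ) (x y z : Fin (N+2) → ℚ) :
    LamForm N (x + y) z = LamForm N x z + LamForm N y z := by
  unfold LamForm
  rw [show (∑ i : Fin (N+2), if 4 ≤ (i:ℕ) then (x + y) i * z i else 0)
      = ∑ i : Fin (N+2), ((if 4 ≤ (i:ℕ) then x i * z i else 0) + (if 4 ≤ (i:ℕ) then y i * z i else 0)) from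
    Finset.sum_congr rfl (fun i _ => by simp only [Pi.add_apply]; split_ifs <;> ring),
    Finset.sum_add_distrib]
  simp only [Pi.add_apply]; ring

lemma lamForm_smul_left (N : ℕ) (c : ℚ) (x z : Fin (N+2) → ℚ) :
    LamForm N (c • x) z = c * LamForm N x z := by
  unfold LamForm
  rw [show (∑ i : Fin (N+2), if 4 ≤ (i:ℕ) then (c • x) i * z i else 0)
      = ∑ i : Fin (N+2), c * (if 4 ≤ (i:ℕ) then x i * z i else 0) from
    Finset.sum_congr rfl (fun i _ => by simp only [Pi.smul_apply, smul_eq_mul]; split_ifs <;> ring),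
    ← Finset.mul_sum]
  simp only [Pi.smul_apply, smul_eq_mul]; ring

lemma lamForm_add_right (N : ℕ) (x y z : Fin (N+2) → ℚ) :
    LamForm N x (y + z) = LamForm N x y + LamForm N x z := by
  rw [lamForm_comm, lamForm_add_left, lamForm_comm N y x, lamForm_comm N z x]

lemma lamForm_smul_right (N : ℕ) (c : ℚ) (x z : Fin (N+2) → ℚ) :
    LamForm N x (c • z) = c * LamForm N x z := by
  rw [lamForm_comm, lamForm_smul_left, lamForm_comm]

lemma lamForm_comb (N : ℕ) (x y : Fin (N+2) → ℚ) (a b c d : ℚ) :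
    LamForm N (a • x + b • y) (c • x + d • y)
      = a*c * LamForm N x x + (a*d + b*c) * LamForm N x y + b*d * LamForm N y y := by
  simp only [lamForm_add_left, lamForm_add_right, lamForm_smul_left, lamForm_smul_right]
  rw [lamForm_comm N y x]; ring

lemma LamSet.add' {N : ℕ} {x y : Fin (N+2) → ℚ} (hx : x ∈ LamSet N) (hy : y ∈ LamSet N) :
    x + y ∈ LamSet N := by
  obtain ⟨hxi, ax, hax⟩ := hx
  obtain ⟨hyi, ay, hay⟩ := hy
  refine ⟨fun i => ?_, ax + ay, ?_⟩
  · obtain ⟨a, ha⟩ := hxi i; obtain ⟨b, hb⟩ := hyi i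
    exact ⟨a + b, by simp [ha, hb]⟩
  · rw [show (∑ i : Fin (N+2), if 4 ≤ (i:ℕ) then (x + y) i else 0)
      = ∑ i : Fin (N+2), ((if 4 ≤ (i:ℕ) then x i else 0) + (if 4 ≤ (i:ℕ) then y i else 0)) from
      Finset.sum_congr rfl (fun i _ => by simp only [Pi.add_apply]; split_ifs <;> ring),
      Finset.sum_add_distrib, hax, hay]
    push_cast; ring

lemma LamSet.zsmul' {N : ℕ} (k : ℤ) {x : Fin (N+2) → ℚ} (hx : x ∈ LamSet N) :
    (k : ℚ) • x ∈ LamSet N := by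
  obtain ⟨hxi, ax, hax⟩ := hx
  refine ⟨fun i => ?_, k * ax, ?_⟩
  · obtain ⟨a, ha⟩ := hxi i; exact ⟨k * a, by simp [ha]⟩
  · rw [show (∑ i : Fin (N+2), if 4 ≤ (i:ℕ) then ((k:ℚ) • x) i else 0)
      = ∑ i : Fin (N+2), (k:ℚ) * (if 4 ≤ (i:ℕ) then x i else 0) from
      Finset.sum_congr rfl (fun i _ => by simp only [Pi.smul_apply, smul_eq_mul]; split_ifs <;> ring),
      ← Finset.mul_sum, hax]
    push_cast; ring

def dvec (N : ℕ) (j : Fin (N+2)) : Fin (N+2) → ℚ := fun i => if i = j then 1 else 0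

lemma fin_v0 (N : ℕ) : ((0 : Fin (N+2)) : ℕ) = 0 := rfl
lemma fin_v1 (N : ℕ) : ((1 : Fin (N+2)) : ℕ) = 1 := by
  show 1 % (N+2) = 1; exact Nat.mod_eq_of_lt (by omega)
lemma fin_v2 (N : ℕ) (hN : 5 ≤ N) : ((2 : Fin (N+2)) : ℕ) = 2 := by
  show 2 % (N+2) = 2; exact Nat.mod_eq_of_lt (by omega)
lemma fin_v3 (N : ℕ) (hN : 5 ≤ N) : ((3 : Fin (N+2)) : ℕ) = 3 := by
  show 3 % (N+2) = 3; exact Nat.mod_eq_of_lt (by omega)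

lemma dvec_sum (N : ℕ) (u : Fin (N+2) → ℚ) (j : Fin (N+2)) :
    (∑ i : Fin (N+2), if 4 ≤ (i:ℕ) then u i * dvec N j i else 0)
      = if 4 ≤ (j:ℕ) then u j else 0 := by
  have h : (∑ i : Fin (N+2), if 4 ≤ (i:ℕ) then u i * dvec N j i else 0)
       = ∑ i : Fin (N+2), if i = j then (if 4 ≤ (i:ℕ) then u i else 0) else 0 := by
    apply Finset.sum_congr rfl; intro i _
    unfold dvec; by_cases h : i = j <;> simp [h]
  rw [h, Finset.sum_ite_eq' Finset.univ j]; simp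

lemma dvec_sum' (N : ℕ) (j : Fin (N+2)) :
    (∑ i : Fin (N+2), if 4 ≤ (i:ℕ) then dvec N j i else 0)
      = if 4 ≤ (j:ℕ) then 1 else 0 := by
  have h : (∑ i : Fin (N+2), if 4 ≤ (i:ℕ) then dvec N j i else 0)
       = ∑ i : Fin (N+2), if i = j then (if 4 ≤ (i:ℕ) then (1:ℚ) else 0) else 0 := by
    apply Finset.sum_congr rfl; intro i _
    unfold dvec; by_cases h : i = j <;> simp [h]
  rw [h, Finset.sum_ite_eq' Finset.univ j]; simp

lemma dvec_int (N : ℕ) (j : Fin (N+2)) : ∀ i, ∃ a : ℤ, dvec N j i = (a : ℚ) :=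
  fun i => ⟨if i = j then 1 else 0, by unfold dvec; split_ifs <;> simp⟩

lemma dvec_mem (N : ℕ) (j : Fin (N+2)) (hj : ¬ 4 ≤ (j:ℕ)) : dvec N j ∈ LamSet N :=
  ⟨dvec_int N j, 0, by rw [dvec_sum']; simp [hj]⟩

lemma dvec2_mem (N : ℕ) (j k : Fin (N+2)) (hj : 4 ≤ (j:ℕ)) (hk : 4 ≤ (k:ℕ)) :
    dvec N j + dvec N k ∈ LamSet N := by
  refine ⟨fun i => ?_, 1, ?_⟩
  · obtain ⟨a, ha⟩ := dvec_int N j i; obtain ⟨b, hb⟩ := dvec_int N k i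
    exact ⟨a + b, by simp [ha, hb]⟩
  · rw [show (∑ i : Fin (N+2), if 4 ≤ (i:ℕ) then (dvec N j + dvec N k) i else 0)
      = ∑ i : Fin (N+2), ((if 4 ≤ (i:ℕ) then dvec N j i else 0) + (if 4 ≤ (i:ℕ) then dvec N k i else 0)) from
      Finset.sum_congr rfl (fun i _ => by simp only [Pi.add_apply]; split_ifs <;> ring),
      Finset.sum_add_distrib, dvec_sum', dvec_sum']
    simp [hj, hk]; norm_num

lemma lamForm_dvec (N : ℕ) (u : Fin (N+2) → ℚ) (j : Fin (N+2)) :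
    LamForm N u (dvec N j) = u 0 * dvec N j 1 + u 1 * dvec N j 0
      + u 2 * dvec N j 3 + u 3 * dvec N j 2 - (if 4 ≤ (j:ℕ) then u j else 0) := by
  unfold LamForm; rw [dvec_sum]

lemma lamForm_d0 (N : ℕ) (hN : 5 ≤ N) (u : Fin (N+2) → ℚ) :
    LamForm N u (dvec N ⟨0, by omega⟩) = u 1 := by
  rw [lamForm_dvec]; unfold dvec
  norm_num [Fin.ext_iff, fin_v0, fin_v1, fin_v2 N hN, fin_v3 N hN,
    Nat.mod_eq_of_lt (show 3 < N+2 by omega), Nat.mod_eq_of_lt (show 2 < N+2 by omega)]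
lemma lamForm_d1 (N : ℕ) (hN : 5 ≤ N) (u : Fin (N+2) → ℚ) :
    LamForm N u (dvec N ⟨1, by omega⟩) = u 0 := by
  rw [lamForm_dvec]; unfold dvec
  norm_num [Fin.ext_iff, fin_v0, fin_v1, fin_v2 N hN, fin_v3 N hN,
    Nat.mod_eq_of_lt (show 3 < N+2 by omega), Nat.mod_eq_of_lt (show 2 < N+2 by omega)]
lemma lamForm_d2 (N : ℕ) (hN : 5 ≤ N) (u : Fin (N+2) → ℚ) :
    LamForm N u (dvec N ⟨2, by omega⟩) = u 3 := by
  rw [lamForm_dvec]; unfold dvec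
  norm_num [Fin.ext_iff, fin_v0, fin_v1, fin_v2 N hN, fin_v3 N hN,
    Nat.mod_eq_of_lt (show 3 < N+2 by omega), Nat.mod_eq_of_lt (show 2 < N+2 by omega)]
lemma lamForm_d3 (N : ℕ) (hN : 5 ≤ N) (u : Fin (N+2) → ℚ) :
    LamForm N u (dvec N ⟨3, by omega⟩) = u 2 := by
  rw [lamForm_dvec]; unfold dvec
  norm_num [Fin.ext_iff, fin_v0, fin_v1, fin_v2 N hN, fin_v3 N hN,
    Nat.mod_eq_of_lt (show 3 < N+2 by omega), Nat.mod_eq_of_lt (show 2 < N+2 by omega)]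

lemma lamForm_dhi (N : ℕ) (hN : 5 ≤ N) (u : Fin (N+2) → ℚ) (j : Fin (N+2)) (hj : 4 ≤ (j:ℕ)) :
    LamForm N u (dvec N j) = - u j := by
  rw [lamForm_dvec]; unfold dvec
  have h0 : ¬ ((1 : Fin (N+2)) = j) := by rw [Fin.ext_iff, fin_v1]; omega
  have h1 : ¬ ((0 : Fin (N+2)) = j) := by rw [Fin.ext_iff, fin_v0]; omega
  have h2 : ¬ ((3 : Fin (N+2)) = j) := by rw [Fin.ext_iff, fin_v3 N hN]; omega
  have h3 : ¬ ((2 : Fin (N+2)) = j) := by rw [Fin.ext_iff, fin_v2 N hN]; omega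
  simp [h0, h1, h2, h3, hj]

lemma lamForm_int (N : ℕ) (x y : Fin (N+2) → ℚ) (cx cy : Fin (N+2) → ℤ)
    (hx : ∀ i, x i = cx i) (hy : ∀ i, y i = cy i) :
    LamForm N x y = ((cx 0 * cy 1 + cx 1 * cy 0 + cx 2 * cy 3 + cx 3 * cy 2
      - ∑ i : Fin (N+2), (if 4 ≤ (i:ℕ) then cx i * cy i else 0) : ℤ) : ℚ) := by
  have hs : ((∑ i : Fin (N+2), (if 4 ≤ (i:ℕ) then cx i * cy i else 0) : ℤ) : ℚ)
      = ∑ i : Fin (N+2), (if 4 ≤ (i:ℕ) then x i * y i else 0) := by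
    rw [Int.cast_sum]
    apply Finset.sum_congr rfl; intro i _
    split_ifs <;> simp [hx i, hy i]
  unfold LamForm
  rw [hx 0, hx 1, hx 2, hx 3, hy 0, hy 1, hy 2, hy 3, ← hs]
  push_cast; ring

lemma sum_int (N : ℕ) (x : Fin (N+2) → ℚ) (cx : Fin (N+2) → ℤ) (hx : ∀ i, x i = cx i) :
    (∑ i : Fin (N+2), if 4 ≤ (i:ℕ) then x i else 0)
      = ((∑ i : Fin (N+2), if 4 ≤ (i:ℕ) then cx i else 0 : ℤ) : ℚ) := by
  rw [Int.cast_sum]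
  apply Finset.sum_congr rfl; intro i _
  split_ifs <;> simp [hx i]

lemma count_range : ∀ m : ℕ, 4 ≤ m →
    (∑ i ∈ Finset.range m, if 4 ≤ i then (1:ℤ) else 0) = (m : ℤ) - 4 := by
  intro m hm
  induction m with
  | zero => omega
  | succ n ih =>
    rcases Nat.lt_or_ge n 4 with h | h
    · interval_cases n <;> simp_all <;> decide
    · rw [Finset.sum_range_succ, ih h, if_pos (by omega)]
      push_cast; ring

lemma count_fin (N : ℕ) (hN : 5 ≤ N) :
    (∑ i : Fin (N+2), if 4 ≤ (i:ℕ) then (1:ℤ) else 0) = (N : ℤ) - 2 := by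
  rw [Fin.sum_univ_eq_sum_range (fun i => if 4 ≤ i then (1:ℤ) else 0) (N+2),
    count_range (N+2) (by omega)]
  push_cast; ring

lemma exists_odd (N : ℕ) (hN : 5 ≤ N) (hmod : N % 8 = 5) (u : Fin (N+2) → ℚ)
    (hu : u ∈ LamSet N) (huu : LamForm N u u = -2) :
    ∃ x ∈ LamSet N, ∃ m : ℤ, LamForm N u x = 2*(m:ℚ)+1 := by
  by_contra hcon
  push_neg at hcon
  obtain ⟨huI, A, hA⟩ := hu
  choose c hc using huI
  have heven : ∀ x ∈ LamSet N, ∃ m : ℤ, LamForm N u x = 2*(m:ℚ) := by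
    intro x hx
    choose cx hcx using hx.1
    have hint := lamForm_int N u x c cx hc hcx
    rcases Int.even_or_odd (c 0 * cx 1 + c 1 * cx 0 + c 2 * cx 3 + c 3 * cx 2
      - ∑ i : Fin (N+2), (if 4 ≤ (i:ℕ) then c i * cx i else 0)) with ⟨m, hm⟩ | ⟨m, hm⟩
    · exact ⟨m, by rw [hint, hm]; push_cast; ring⟩
    · exact absurd (by rw [hint, hm]; push_cast; ring) (hcon x hx m)
  -- low coordinates are even
  have e0 : ∃ m : ℤ, c 0 = 2*m := by
    obtain ⟨m, hm⟩ := heven _ (dvec_mem N ⟨1, by omega⟩ (by norm_num))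
    rw [lamForm_d1 N hN u] at hm
    exact ⟨m, by exact_mod_cast (hc 0) ▸ hm⟩
  have e1 : ∃ m : ℤ, c 1 = 2*m := by
    obtain ⟨m, hm⟩ := heven _ (dvec_mem N ⟨0, by omega⟩ (by norm_num))
    rw [lamForm_d0 N hN u] at hm
    exact ⟨m, by exact_mod_cast (hc 1) ▸ hm⟩
  have e2 : ∃ m : ℤ, c 2 = 2*m := by
    obtain ⟨m, hm⟩ := heven _ (dvec_mem N ⟨3, by omega⟩ (by norm_num))
    rw [lamForm_d3 N hN u] at hm
    exact ⟨m, by exact_mod_cast (hc 2) ▸ hm⟩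
  have e3 : ∃ m : ℤ, c 3 = 2*m := by
    obtain ⟨m, hm⟩ := heven _ (dvec_mem N ⟨2, by omega⟩ (by norm_num))
    rw [lamForm_d2 N hN u] at hm
    exact ⟨m, by exact_mod_cast (hc 3) ▸ hm⟩
  -- high coordinates all have the same parity
  set i4 : Fin (N+2) := ⟨4, by omega⟩ with hi4
  have hi4v : (i4 : ℕ) = 4 := rfl
  have hpar : ∀ j : Fin (N+2), 4 ≤ (j:ℕ) → (c j) % 2 = (c i4) % 2 := by
    intro j hj
    obtain ⟨m, hm⟩ := heven _ (dvec2_mem N i4 j (by omega) hj)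
    rw [lamForm_add_right, lamForm_dhi N hN u i4 (by omega), lamForm_dhi N hN u j hj] at hm
    have h2 : (-(c i4 : ℚ)) + (-(c j : ℚ)) = 2*m := by rw [← hc i4, ← hc j]; exact hm
    have h3 : -(c i4) + -(c j) = 2*m := by exact_mod_cast h2
    omega
  -- integer versions of membership and self-pairing
  have hAint : (∑ i : Fin (N+2), if 4 ≤ (i:ℕ) then c i else 0) = 2*A := by
    rw [sum_int N u c hc] at hA; exact_mod_cast hA
  have hS : c 0 * c 1 + c 1 * c 0 + c 2 * c 3 + c 3 * c 2
      - (∑ i : Fin (N+2), if 4 ≤ (i:ℕ) then c i * c i else 0) = -2 := by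
    have h := lamForm_int N u u c c hc hc
    rw [huu] at h; exact_mod_cast h.symm
  rcases Int.emod_two_eq_zero_or_one (c i4) with hp | hp
  · -- all high coordinates even: contradiction mod 4
    have hall : ∀ j : Fin (N+2), 4 ≤ (j:ℕ) → c j % 2 = 0 := fun j hj => by
      have := hpar j hj; omega
    have h4 : (4:ℤ) ∣ ∑ i : Fin (N+2), (if 4 ≤ (i:ℕ) then c i * c i else 0) := by
      apply Finset.dvd_sum; intro i _
      split_ifs with h
      · obtain ⟨d, hd⟩ := Int.even_iff.mpr (hall i h)
        exact ⟨d*d, by rw [hd]; ring⟩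
      · exact dvd_zero 4
    obtain ⟨k, hk⟩ := h4
    obtain ⟨a0, ha0⟩ := e0
    obtain ⟨a2, ha2⟩ := e2
    rw [hk, ha0, ha2] at hS
    set t : ℤ := a0 * c 1 + a2 * c 3 - k with ht
    have hfin : 4*t = -2 := by rw [ht]; linear_combination hS
    omega
  · -- all high coordinates odd: sum over N-2 (odd count) of odds is odd
    have hall : ∀ j : Fin (N+2), 4 ≤ (j:ℕ) → c j % 2 = 1 := fun j hj => by
      have := hpar j hj; omega
    have hdvd : (2:ℤ) ∣ ∑ i : Fin (N+2), (if 4 ≤ (i:ℕ) then c i - 1 else 0) := by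
      apply Finset.dvd_sum; intro i _
      split_ifs with h
      · have := hall i h; omega
      · exact dvd_zero 2
    have hsplit : (∑ i : Fin (N+2), (if 4 ≤ (i:ℕ) then c i - 1 else 0))
        = (∑ i : Fin (N+2), if 4 ≤ (i:ℕ) then c i else 0)
          - (∑ i : Fin (N+2), if 4 ≤ (i:ℕ) then (1:ℤ) else 0) := by
      rw [← Finset.sum_sub_distrib]
      apply Finset.sum_congr rfl; intro i _
      split_ifs <;> ring
    obtain ⟨t, ht⟩ := hdvd
    rw [hsplit, hAint, count_fin N hN] at ht
    omega

/-- Let `Λ` be a `D`-lattice of dimension `N ≡ 5 (mod 8)` and let `v₁, v₂` be unigonal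
vectors (square `-12`, divisibility `4`) with `[v₁/4] = [v₂/4]` in `A_Λ`, linearly
independent and spanning a negative definite sublattice.  Then `(v₁, v₂) = 4`, the
vector `u = (v₁ - v₂)/4` lies in `Λ` with `u² = -2`, and `w = (v₁ + v₂)/2 ∈ Λ` is a
hyperelliptic vector: `w² = -4`, `div(w) = 2`, and `q(w*) ≡ 1 (mod 2ℤ)`. -/
theorem statement17 (N : ℕ) (hN : 5 ≤ N) (hmod : N % 8 = 5)
    (v₁ v₂ : Fin (N + 2) → ℚ)
    (h₁ : v₁ ∈ LamSet N) (h₂ : v₂ ∈ LamSet N)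
    (hs₁ : LamForm N v₁ v₁ = -12) (hs₂ : LamForm N v₂ v₂ = -12)
    (hd₁ : HasDiv N v₁ 4) (hd₂ : HasDiv N v₂ 4)
    (hclass : (1/4 : ℚ) • (v₁ - v₂) ∈ LamSet N)
    (hindep : ∀ a b : ℚ, a • v₁ + b • v₂ = 0 → a = 0 ∧ b = 0)
    (hnegdef : ∀ a b : ℚ, ¬(a = 0 ∧ b = 0) →
      LamForm N (a • v₁ + b • v₂) (a • v₁ + b • v₂) < 0) :
    LamForm N v₁ v₂ = 4 ∧
    LamForm N ((1/4 : ℚ) • (v₁ - v₂)) ((1/4 : ℚ) • (v₁ - v₂)) = -2 ∧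
    (1/2 : ℚ) • (v₁ + v₂) ∈ LamSet N ∧
    LamForm N ((1/2 : ℚ) • (v₁ + v₂)) ((1/2 : ℚ) • (v₁ + v₂)) = -4 ∧
    HasDiv N ((1/2 : ℚ) • (v₁ + v₂)) 2 ∧
    (∃ a : ℤ, LamForm N ((1/4 : ℚ) • (v₁ + v₂)) ((1/4 : ℚ) • (v₁ + v₂)) =
      1 + 2 * (a : ℚ)) := by
  have hu_eq : (1/4 : ℚ) • (v₁ - v₂) = (1/4:ℚ) • v₁ + (-(1/4):ℚ) • v₂ := by
    funext i; simp only [Pi.smul_apply, Pi.add_apply, Pi.sub_apply, smul_eq_mul]; ring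
  have hw_eq : (1/2 : ℚ) • (v₁ + v₂) = (1/2:ℚ) • v₁ + (1/2:ℚ) • v₂ := by
    funext i; simp only [Pi.smul_apply, Pi.add_apply, smul_eq_mul]; ring
  have hw4_eq : (1/4 : ℚ) • (v₁ + v₂) = (1/4:ℚ) • v₁ + (1/4:ℚ) • v₂ := by
    funext i; simp only [Pi.smul_apply, Pi.add_apply, smul_eq_mul]; ring
  have hwu_eq : (1/2 : ℚ) • (v₁ + v₂) = v₁ + ((-2 : ℤ) : ℚ) • ((1/4 : ℚ) • (v₁ - v₂)) := by
    funext i; simp only [Pi.smul_apply, Pi.add_apply, Pi.sub_apply, smul_eq_mul]; push_cast; ring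
  -- Step 1: (v₁, v₂) = 4
  obtain ⟨a, ha⟩ := hd₁.1 _ hclass
  rw [hu_eq, lamForm_add_right, lamForm_smul_right, lamForm_smul_right, hs₁] at ha
  have hBv : LamForm N v₁ v₂ = -12 - 16*(a:ℚ) := by linarith
  have hn := hnegdef (LamForm N v₁ v₂) 12 (by rintro ⟨-, h⟩; norm_num at h)
  rw [lamForm_comb, hs₁, hs₂] at hn
  have hsq : (-12 - 16*(a:ℚ))^2 < 144 := by rw [← hBv]; nlinarith [hn]
  have h1 : (a:ℚ) < 0 := by nlinarith [hsq]
  have h2 : (-2:ℚ) < (a:ℚ) := by nlinarith [hsq]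
  have ha1 : a < 0 := by exact_mod_cast h1
  have ha2 : -2 < a := by exact_mod_cast h2
  have haa : a = -1 := by omega
  rw [haa] at hBv
  have hB4 : LamForm N v₁ v₂ = 4 := by rw [hBv]; norm_num
  -- Step 2: u² = -2
  have hu2 : LamForm N ((1/4 : ℚ) • (v₁ - v₂)) ((1/4 : ℚ) • (v₁ - v₂)) = -2 := by
    rw [hu_eq, lamForm_comb, hs₁, hs₂, hB4]; norm_num
  -- Step 3: w ∈ Λ
  have hwmem : (1/2 : ℚ) • (v₁ + v₂) ∈ LamSet N := by
    rw [hwu_eq]; exact LamSet.add' h₁ (LamSet.zsmul' (-2) hclass)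
  -- Step 4: w² = -4
  have hw2 : LamForm N ((1/2 : ℚ) • (v₁ + v₂)) ((1/2 : ℚ) • (v₁ + v₂)) = -4 := by
    rw [hw_eq, lamForm_comb, hs₁, hs₂, hB4]; norm_num
  refine ⟨hB4, hu2, hwmem, hw2, ⟨?_, ?_⟩, ⟨-1, by rw [hw4_eq, lamForm_comb, hs₁, hs₂, hB4]; norm_num⟩⟩
  · -- divisibility by 2
    intro x hx
    obtain ⟨a1, ha1'⟩ := hd₁.1 x hx
    obtain ⟨a2, ha2'⟩ := hd₂.1 x hx
    refine ⟨a1 + a2, ?_⟩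
    rw [hw_eq, lamForm_add_left, lamForm_smul_left, lamForm_smul_left, ha1', ha2']
    push_cast; ring
  · -- attainment of 2
    obtain ⟨x₀, hx₀, m, hm⟩ := exists_odd N hN hmod _ hclass hu2
    obtain ⟨a1, ha1'⟩ := hd₁.1 x₀ hx₀
    have hw0 : LamForm N ((1/2:ℚ) • (v₁ + v₂)) x₀ = 4*(a1:ℚ) - 2*(2*(m:ℚ)+1) := by
      rw [hwu_eq, lamForm_add_left, lamForm_smul_left, ha1', hm]
      push_cast; ring
    refine ⟨x₀ + (((a1 - m - 1 : ℤ)) : ℚ) • v₁, LamSet.add' hx₀ (LamSet.zsmul' _ h₁), ?_⟩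
    have hwv1 : LamForm N ((1/2:ℚ) • (v₁ + v₂)) v₁ = -4 := by
      rw [hw_eq, lamForm_add_left, lamForm_smul_left, lamForm_smul_left, hs₁,
        lamForm_comm N v₂ v₁, hB4]
      norm_num
    rw [lamForm_add_right, lamForm_smul_right, hw0, hwv1]
    push_cast; ring
end
end
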